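/- arXiv:2112.05261 — 16 statements merged into one kernel-verified Lean document; each statement's English description precedes it below -/
import Mathlib

section
/- Let s n : ℕ and let R : Matrix (Fin s) (Fin s) ℂ. Then the matrix exponential of the sum of single-site embeddings of R equals the n-fold Kronecker power of the matrix exponential of R: Matrix.exp (∑_{v : Fin n} E_v(R)) = K(Matrix.exp R). (This shows that any EDU-QGC node layer V^{⊗n} with V = exp(R) is a single EH-QGC layer.) -/
open scoped BigOperators

/-- Single-site embedding: `I ⊗ ⋯ ⊗ R ⊗ ⋯ ⊗ I` with `R` in position `v`. -/
def singleSite {s n : ℕ} (R : Matrix (Fin s) (Fin s) ℂ) (v : Fin n) :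
    Matrix (Fin n → Fin s) (Fin n → Fin s) ℂ := fun x y =>
  R (x v) (y v) * ∏ u ∈ Finset.univ.filter (· ≠ v), (if x u = y u then (1 : ℂ) else 0)

/-- `n`-fold Kronecker power of a single-site matrix. -/
def kronPow {s : ℕ} (n : ℕ) (V : Matrix (Fin s) (Fin s) ℂ) :
    Matrix (Fin n → Fin s) (Fin n → Fin s) ℂ := fun x y =>
  ∏ v : Fin n, V (x v) (y v)

/-- Generalized tensor: entrywise product of one matrix per site. -/
def tens {s n : ℕ} (g : Fin n → Matrix (Fin s) (Fin s) ℂ) :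
    Matrix (Fin n → Fin s) (Fin n → Fin s) ℂ := fun x y =>
  ∏ v : Fin n, g v (x v) (y v)

/-- Update of the constant-identity family. -/
def upd {s n : ℕ} (v : Fin n) (R : Matrix (Fin s) (Fin s) ℂ) :
    Fin n → Matrix (Fin s) (Fin s) ℂ :=
  Function.update (fun _ => (1 : Matrix (Fin s) (Fin s) ℂ)) v R

lemma tens_mul {s n : ℕ} (g h : Fin n → Matrix (Fin s) (Fin s) ℂ) :
    tens g * tens h = tens (fun v => g v * h v) := by
  funext x y
  show (tens g * tens h) x y = _
  rw [Matrix.mul_apply]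
  unfold tens
  simp_rw [Matrix.mul_apply, Finset.prod_univ_sum, Fintype.piFinset_univ,
    Finset.prod_mul_distrib]

lemma tens_one {s n : ℕ} : tens (fun _ : Fin n => (1 : Matrix (Fin s) (Fin s) ℂ)) = 1 := by
  funext x y
  unfold tens
  by_cases hxy : x = y
  · subst hxy; simp [Matrix.one_apply]
  · rw [Matrix.one_apply_ne hxy]
    obtain ⟨v, hv⟩ := Function.ne_iff.mp hxy
    exact Finset.prod_eq_zero (Finset.mem_univ v) (by simp [Matrix.one_apply, hv])

lemma singleSite_eq_tens {s n : ℕ} (R : Matrix (Fin s) (Fin s) ℂ) (v : Fin n) :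
    singleSite R v = tens (upd v R) := by
  funext x y
  unfold singleSite tens
  rw [Finset.prod_eq_mul_prod_sdiff_singleton_of_mem (Finset.mem_univ v)
    (fun u => upd v R u (x u) (y u))]
  rw [show upd v R v = R by simp [upd]]
  congr 1
  rw [show Finset.univ \ {v} = Finset.univ.filter (· ≠ v) by ext u; simp]
  apply Finset.prod_congr rfl
  intro u hu
  simp only [Finset.mem_filter] at hu
  rw [show upd v R u = 1 by simp [upd, Function.update_of_ne hu.2], Matrix.one_apply]

lemma upd_mul_upd {s n : ℕ} (A B : Matrix (Fin s) (Fin s) ℂ) (v : Fin n) :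
    (fun u => upd v A u * upd v B u) = upd v (A * B) := by
  funext u
  by_cases h : u = v
  · subst h; simp [upd]
  · simp [upd, Function.update_of_ne h]

/-- `singleSite · v` as a ring hom. -/
def singleSiteHom {s n : ℕ} (v : Fin n) :
    Matrix (Fin s) (Fin s) ℂ →+* Matrix (Fin n → Fin s) (Fin n → Fin s) ℂ where
  toFun R := singleSite R v
  map_one' := by
    show singleSite 1 v = 1
    rw [singleSite_eq_tens]
    rw [show upd v (1 : Matrix (Fin s) (Fin s) ℂ) = fun _ => 1 from Function.update_eq_self v _]
    exact tens_one
  map_mul' A B := by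
    show singleSite (A * B) v = singleSite A v * singleSite B v
    rw [singleSite_eq_tens, singleSite_eq_tens, singleSite_eq_tens, tens_mul, upd_mul_upd]
  map_zero' := by funext x y; simp [singleSite]
  map_add' A B := by funext x y; simp [singleSite, add_mul]

lemma continuous_singleSiteHom {s n : ℕ} (v : Fin n) :
    Continuous (singleSiteHom (s := s) (n := n) v) := by
  show Continuous fun R => singleSite R v
  apply continuous_matrix
  intro x y
  exact (continuous_apply_apply (x v) (y v)).mul continuous_const

open NormedSpace in
lemma exp_singleSite {s n : ℕ} (R : Matrix (Fin s) (Fin s) ℂ) (v : Fin n) :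
    exp (singleSite R v) = singleSite (exp R) v := by
  letI : SeminormedRing (Matrix (Fin s) (Fin s) ℂ) := Matrix.linftyOpSemiNormedRing
  letI : NormedRing (Matrix (Fin s) (Fin s) ℂ) := Matrix.linftyOpNormedRing
  letI : NormedAlgebra ℂ (Matrix (Fin s) (Fin s) ℂ) := Matrix.linftyOpNormedAlgebra
  letI : SeminormedRing (Matrix (Fin n → Fin s) (Fin n → Fin s) ℂ) :=
    Matrix.linftyOpSemiNormedRing
  letI : NormedRing (Matrix (Fin n → Fin s) (Fin n → Fin s) ℂ) := Matrix.linftyOpNormedRing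
  letI : NormedAlgebra ℂ (Matrix (Fin n → Fin s) (Fin n → Fin s) ℂ) :=
    Matrix.linftyOpNormedAlgebra
  letI : NormedAlgebra ℚ (Matrix (Fin s) (Fin s) ℂ) := Matrix.linftyOpNormedAlgebra
  letI : NormedAlgebra ℚ (Matrix (Fin n → Fin s) (Fin n → Fin s) ℂ) :=
    Matrix.linftyOpNormedAlgebra
  exact (map_exp (singleSiteHom v) (continuous_singleSiteHom v) R).symm

lemma commute_singleSite {s n : ℕ} (A B : Matrix (Fin s) (Fin s) ℂ) {v w : Fin n}
    (hvw : v ≠ w) : Commute (singleSite A v) (singleSite B w) := by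
  unfold Commute SemiconjBy
  rw [singleSite_eq_tens, singleSite_eq_tens, tens_mul, tens_mul]
  refine congrArg tens ?_
  funext u
  by_cases h1 : u = v
  · subst h1; simp [upd, Function.update_of_ne hvw, Function.update_of_ne (Ne.symm hvw)]
  · by_cases h2 : u = w
    · subst h2; simp [upd, Function.update_of_ne (Ne.symm hvw), Function.update_of_ne h1]
    · simp [upd, Function.update_of_ne h1, Function.update_of_ne h2]

lemma pairwise_commute_singleSite {s n : ℕ} (V : Matrix (Fin s) (Fin s) ℂ) (S : Finset (Fin n)) :
    (S : Set (Fin n)).Pairwise (Function.onFun Commute fun v => singleSite V v) :=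
  fun _ _ _ _ hab => commute_singleSite V V hab

lemma noncommProd_singleSite {s n : ℕ} (V : Matrix (Fin s) (Fin s) ℂ) (S : Finset (Fin n)) :
    S.noncommProd (fun v => singleSite V v) (pairwise_commute_singleSite V S) =
      tens (fun u => if u ∈ S then V else 1) := by
  classical
  induction S using Finset.induction_on with
  | empty => simpa using tens_one.symm
  | @insert a S ha ih =>
    rw [Finset.noncommProd_insert_of_notMem _ _ _ _ ha, ih, singleSite_eq_tens, tens_mul]
    refine congrArg tens ?_
    funext u
    by_cases h : u = a
    · subst h; simp [upd, ha]
    · by_cases h2 : u ∈ S <;>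
        simp [upd, Function.update_of_ne h, h, h2, Finset.mem_insert]

theorem exp_sum_singleSite_eq_kronPow_exp (s n : ℕ) (R : Matrix (Fin s) (Fin s) ℂ) :
    NormedSpace.exp (∑ v : Fin n, singleSite R v) = kronPow n (NormedSpace.exp R) := by
  rw [Matrix.exp_sum_of_commute Finset.univ (fun v => singleSite R v)
    (pairwise_commute_singleSite R Finset.univ)]
  have hc : ((Finset.univ : Finset (Fin n)) : Set (Fin n)).Pairwise
      (Function.onFun Commute fun v => NormedSpace.exp (singleSite R v)) := by
    intro a _ b _ hab
    simp only [Function.onFun, exp_singleSite]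
    exact commute_singleSite _ _ hab
  rw [Finset.noncommProd_congr rfl (fun v _ => exp_singleSite R v) hc]
  rw [noncommProd_singleSite]
  simp only [Finset.mem_univ, if_true]
  rfl
end

section
/- Let s n : ℕ, let R : Matrix (Fin s × Fin s) (Fin s × Fin s) ℂ be a diagonal matrix, and let E be a finite set of ordered pairs (j,k) of distinct elements of Fin n. Then each embedding E_{j,k}(R) is a diagonal matrix, these matrices pairwise commute, and for any list enumerating E (in any order) the exponential of the sum equals the product of the exponentials: Matrix.exp (∑_{(j,k) ∈ E} E_{j,k}(R)) = ∏_{(j,k) ∈ E} E_{j,k}(Matrix.exp R). (This shows that a layer of commuting diagonal two-node unitaries applied along the edges of a graph is generated by a single EH-QGC Hamiltonian.) -/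
open scoped BigOperators

/-- Two-site embedding of a two-node operator at the (ordered) pair of sites `(j, k)`. -/
def twoSite {s n : ℕ} (R : Matrix (Fin s × Fin s) (Fin s × Fin s) ℂ) (j k : Fin n) :
    Matrix (Fin n → Fin s) (Fin n → Fin s) ℂ := fun x y =>
  R (x j, x k) (y j, y k) *
    ∏ u ∈ Finset.univ.filter (fun u => u ∉ ({j, k} : Finset (Fin n))),
      (if x u = y u then (1 : ℂ) else 0)

lemma twoSite_eq_diagonal {s n : ℕ} (R : Matrix (Fin s × Fin s) (Fin s × Fin s) ℂ)
    (hR : R.IsDiag) {j k : Fin n} (hjk : j ≠ k) :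
    twoSite R j k = Matrix.diagonal (fun x => R (x j, x k) (x j, x k)) := by
  ext x y
  by_cases hxy : x = y
  · subst hxy
    simp [twoSite]
  · rw [Matrix.diagonal_apply_ne _ hxy]
    show R (x j, x k) (y j, y k) * _ = 0
    by_cases h1 : (x j, x k) = (y j, y k)
    · obtain ⟨u, hu⟩ : ∃ u, x u ≠ y u := by
        by_contra h
        push_neg at h
        exact hxy (funext h)
      have hxj : x j = y j := (Prod.mk.injEq _ _ _ _ ▸ h1).1
      have hxk : x k = y k := (Prod.mk.injEq _ _ _ _ ▸ h1).2
      apply mul_eq_zero_of_right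
      apply Finset.prod_eq_zero (i := u)
      · simp only [Finset.mem_filter, Finset.mem_univ, true_and, Finset.mem_insert,
          Finset.mem_singleton]
        rintro (rfl | rfl)
        · exact hu hxj
        · exact hu hxk
      · simp [hu]
    · rw [hR h1, zero_mul]

lemma diagonal_list_prod' {m : Type*} [DecidableEq m] [Fintype m] (l : List (m → ℂ)) :
    (l.map Matrix.diagonal).prod = Matrix.diagonal l.prod := by
  induction l with
  | nil => exact (Matrix.diagonal_one).symm
  | cons a t ih => simp [ih, Matrix.diagonal_mul_diagonal]

theorem exp_sum_diag_twoSite (s n : ℕ) (R : Matrix (Fin s × Fin s) (Fin s × Fin s) ℂ)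
    (hR : R.IsDiag) (E : Finset (Fin n × Fin n)) (hE : ∀ p ∈ E, p.1 ≠ p.2) :
    (∀ p ∈ E, (twoSite R p.1 p.2).IsDiag) ∧
    (∀ p ∈ E, ∀ q ∈ E, Commute (twoSite R p.1 p.2) (twoSite R q.1 q.2)) ∧
    (∀ l : List (Fin n × Fin n), l.Perm E.toList →
      NormedSpace.exp (∑ p ∈ E, twoSite R p.1 p.2) =
        (l.map fun p => twoSite (NormedSpace.exp R) p.1 p.2).prod) := by
  have hdiag : ∀ p ∈ E, twoSite R p.1 p.2 =
      Matrix.diagonal (fun x => R (x p.1, x p.2) (x p.1, x p.2)) :=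
    fun p hp => twoSite_eq_diagonal R hR (hE p hp)
  refine ⟨?_, ?_, ?_⟩
  · intro p hp
    rw [hdiag p hp]
    exact Matrix.isDiag_diagonal _
  · intro p hp q hq
    rw [hdiag p hp, hdiag q hq]
    unfold Commute SemiconjBy
    rw [Matrix.diagonal_mul_diagonal, Matrix.diagonal_mul_diagonal]
    exact congrArg Matrix.diagonal (funext fun i => mul_comm _ _)
  · intro l hl
    have hRd : R = Matrix.diagonal R.diag := (Matrix.IsDiag.diagonal_diag hR).symm
    have hexpR : NormedSpace.exp R = Matrix.diagonal (fun a => NormedSpace.exp (R a a)) := by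
      conv_lhs => rw [hRd]
      rw [Matrix.exp_diagonal, Pi.exp_def]
      rfl
    have hexpRdiag : (NormedSpace.exp R).IsDiag := by
      rw [hexpR]; exact Matrix.isDiag_diagonal _
    -- the RHS terms as diagonal matrices
    have hmem : ∀ p ∈ l, p ∈ E := fun p hp => Finset.mem_toList.mp (hl.subset hp)
    set g : Fin n × Fin n → (Fin n → Fin s) → ℂ :=
      fun p x => NormedSpace.exp (R (x p.1, x p.2) (x p.1, x p.2)) with hg
    have hmap : (l.map fun p => twoSite (NormedSpace.exp R) p.1 p.2) =
        (l.map g).map Matrix.diagonal := by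
      rw [List.map_map]
      refine List.map_congr_left fun p hp => ?_
      have hfn : (fun x => NormedSpace.exp R (x p.1, x p.2) (x p.1, x p.2)) = g p := by
        funext x
        rw [hexpR, Matrix.diagonal_apply_eq]
      show twoSite (NormedSpace.exp R) p.1 p.2 = Matrix.diagonal (g p)
      rw [twoSite_eq_diagonal _ hexpRdiag (hE p (hmem p hp)), hfn]
    rw [hmap, diagonal_list_prod']
    have hperm := hl.map g
    rw [hperm.prod_eq, Finset.prod_map_toList]
    -- LHS
    have hsum : (∑ p ∈ E, twoSite R p.1 p.2) =
        Matrix.diagonal (fun x => ∑ p ∈ E, R (x p.1, x p.2) (x p.1, x p.2)) := by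
      rw [Finset.sum_congr rfl hdiag]
      ext x y
      rw [Matrix.sum_apply]
      by_cases h : x = y
      · subst h; simp
      · simp [Matrix.diagonal_apply_ne _ h]
    rw [hsum, Matrix.exp_diagonal, Pi.exp_def]
    apply congrArg Matrix.diagonal
    funext x
    rw [NormedSpace.exp_sum, Finset.prod_apply]
end

section
/- Let s n : ℕ, let V : Matrix (Fin s) (Fin s) ℂ be unitary, let D : Matrix (Fin s × Fin s) (Fin s × Fin s) ℂ be a diagonal unitary, and set U = (Vᴴ ⊗ₖ Vᴴ) * D * (V ⊗ₖ V). Then for any list l of ordered pairs (j,k) of distinct elements of Fin n, the ordered product of the embedded two-site operators decomposes as a global conjugation by a diagonal edge layer: ∏_{(j,k) ∈ l} E_{j,k}(U) = K(Vᴴ) * (∏_{(j,k) ∈ l} E_{j,k}(D)) * K(V). (This shows that any EDU-QGC edge layer can be written as a layer of diagonal unitaries sandwiched between two layers of single-node unitaries.) -/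
open scoped BigOperators Kronecker Matrix

lemma kronPow_mul {s n : ℕ} (A B : Matrix (Fin s) (Fin s) ℂ) :
    kronPow n A * kronPow n B = kronPow n (A * B) := by
  ext x y
  simp only [Matrix.mul_apply, kronPow, ← Finset.prod_mul_distrib]
  rw [Finset.prod_univ_sum (fun _ => (Finset.univ : Finset (Fin s)))
    (fun v a => A (x v) a * B a (y v))]
  simp [Fintype.piFinset_univ]

lemma kronPow_one {s n : ℕ} : kronPow n (1 : Matrix (Fin s) (Fin s) ℂ) = 1 := by
  ext x y
  simp only [kronPow, Matrix.one_apply]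
  by_cases h : x = y
  · subst h; simp
  · rw [if_neg h]
    obtain ⟨v, hv⟩ := Function.ne_iff.mp h
    exact Finset.prod_eq_zero (Finset.mem_univ v) (by simp [hv])

lemma sum_delta {s n : ℕ} (j k : Fin n) (hjk : j ≠ k) (c : Fin n → Fin s)
    (f : (Fin n → Fin s) → ℂ) :
    (∑ z : Fin n → Fin s, f z *
      ∏ u ∈ Finset.univ.filter (fun u => u ∉ ({j, k} : Finset (Fin n))),
        (if z u = c u then (1:ℂ) else 0))
    = ∑ a : Fin s, ∑ b : Fin s, f (Function.update (Function.update c j a) k b) := by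
  classical
  set upd : Fin s × Fin s → (Fin n → Fin s) :=
    fun p => Function.update (Function.update c j p.1) k p.2 with hupd
  have hupdj : ∀ p : Fin s × Fin s, upd p j = p.1 := by
    intro p; simp [upd, Function.update_of_ne hjk]
  have hupdk : ∀ p : Fin s × Fin s, upd p k = p.2 := by
    intro p; simp [upd]
  have hupdo : ∀ (p : Fin s × Fin s) (u : Fin n), u ≠ j → u ≠ k → upd p u = c u := by
    intro p u hj hk; simp [upd, Function.update_of_ne hj, Function.update_of_ne hk]
  have hinj : ∀ p ∈ (Finset.univ : Finset (Fin s × Fin s)), ∀ q ∈ Finset.univ,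
      upd p = upd q → p = q := by
    intro p _ q _ h
    have h1 : upd p j = upd q j := by rw [h]
    have h2 : upd p k = upd q k := by rw [h]
    rw [hupdj, hupdj] at h1; rw [hupdk, hupdk] at h2
    exact Prod.ext h1 h2
  have himg : ∀ z : Fin n → Fin s, z ∉ Finset.image upd Finset.univ →
      f z * ∏ u ∈ Finset.univ.filter (fun u => u ∉ ({j, k} : Finset (Fin n))),
        (if z u = c u then (1:ℂ) else 0) = 0 := by
    intro z hz
    by_cases hall : ∀ u, u ≠ j → u ≠ k → z u = c u
    · exfalso
      apply hz
      refine Finset.mem_image.mpr ⟨(z j, z k), Finset.mem_univ _, ?_⟩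
      funext u
      by_cases hj : u = j
      · subst hj; rw [hupdj]
      · by_cases hk : u = k
        · subst hk; rw [hupdk]
        · rw [hupdo _ u hj hk, hall u hj hk]
    · push_neg at hall
      obtain ⟨u, hj, hk, hu⟩ := hall
      have : (∏ u ∈ Finset.univ.filter (fun u => u ∉ ({j, k} : Finset (Fin n))),
          (if z u = c u then (1:ℂ) else 0)) = 0 :=
        Finset.prod_eq_zero (i := u) (by simp [hj, hk]) (if_neg hu)
      rw [this, mul_zero]
  rw [← Finset.sum_subset (Finset.subset_univ (Finset.image upd Finset.univ))
    (fun z _ hz => himg z hz), Finset.sum_image hinj]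
  rw [Fintype.sum_prod_type]
  refine Finset.sum_congr rfl fun a _ => Finset.sum_congr rfl fun b _ => ?_
  have h1 : (∏ u ∈ Finset.univ.filter (fun u => u ∉ ({j, k} : Finset (Fin n))),
      (if upd (a, b) u = c u then (1:ℂ) else 0)) = 1 := by
    apply Finset.prod_eq_one
    intro u hu
    simp only [Finset.mem_filter, Finset.mem_insert, Finset.mem_singleton] at hu
    push_neg at hu
    rw [if_pos (hupdo _ u hu.2.1 hu.2.2)]
  rw [h1, mul_one]

lemma conj_eq {s n : ℕ} (j k : Fin n) (hjk : j ≠ k) (V : Matrix (Fin s) (Fin s) ℂ)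
    (hVV : V * Vᴴ = 1) (D : Matrix (Fin s × Fin s) (Fin s × Fin s) ℂ) :
    kronPow n V * twoSite ((Vᴴ ⊗ₖ Vᴴ) * D * (V ⊗ₖ V)) j k
      = twoSite D j k * kronPow n V := by
  classical
  set U := (Vᴴ ⊗ₖ Vᴴ) * D * (V ⊗ₖ V) with hU
  have hVVU : (V ⊗ₖ V) * U = D * (V ⊗ₖ V) := by
    rw [hU, ← Matrix.mul_assoc, ← Matrix.mul_assoc, ← Matrix.mul_kronecker_mul, hVV,
      Matrix.one_kronecker_one, Matrix.one_mul]
  have hsplit : ∀ (c : Fin n → Fin s) (a b : Fin s) (g : Fin n → Fin s → ℂ),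
      (∏ v : Fin n, g v (Function.update (Function.update c j a) k b v))
      = g j a * g k b *
        ∏ u ∈ Finset.univ.filter (fun u => u ∉ ({j, k} : Finset (Fin n))),
          g u (c u) := by
    intro c a b g
    rw [← Finset.prod_filter_mul_prod_filter_not Finset.univ
      (fun u => u ∈ ({j, k} : Finset (Fin n)))]
    congr 1
    · rw [Finset.filter_univ_mem]
      rw [Finset.prod_insert (by simp [hjk]), Finset.prod_singleton]
      rw [Function.update_of_ne hjk, Function.update_self, Function.update_self]
    · refine Finset.prod_congr rfl fun u hu => ?_
      simp only [Finset.mem_filter, Finset.mem_insert, Finset.mem_singleton] at hu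
      push_neg at hu
      rw [Function.update_of_ne hu.2.2, Function.update_of_ne hu.2.1]
  ext x y
  rw [Matrix.mul_apply, Matrix.mul_apply]
  set C : ℂ := ∏ u ∈ Finset.univ.filter (fun u => u ∉ ({j, k} : Finset (Fin n))),
    V (x u) (y u) with hC
  have hL : (∑ z : Fin n → Fin s, kronPow n V x z * twoSite U j k z y)
      = ∑ a : Fin s, ∑ b : Fin s,
          (V (x j) a * V (x k) b * C) * U (a, b) (y j, y k) := by
    simp only [twoSite, ← mul_assoc]
    rw [sum_delta j k hjk y (fun z => kronPow n V x z * U (z j, z k) (y j, y k))]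
    simp only [Function.update_of_ne hjk, Function.update_self]
    refine Finset.sum_congr rfl fun a _ => Finset.sum_congr rfl fun b _ => ?_
    rw [kronPow, hsplit y a b (fun v t => V (x v) t)]
  have hR : (∑ z : Fin n → Fin s, twoSite D j k x z * kronPow n V z y)
      = ∑ a : Fin s, ∑ b : Fin s,
          D (x j, x k) (a, b) * (V a (y j) * V b (y k) * C) := by
    have flip : ∀ z : Fin n → Fin s, twoSite D j k x z * kronPow n V z y
        = (D (x j, x k) (z j, z k) * kronPow n V z y) *
          ∏ u ∈ Finset.univ.filter (fun u => u ∉ ({j, k} : Finset (Fin n))),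
            (if z u = x u then (1:ℂ) else 0) := by
      intro z
      simp only [twoSite]
      rw [mul_right_comm]
      congr 1
      exact Finset.prod_congr rfl fun u _ => if_congr eq_comm rfl rfl
    simp only [flip]
    rw [sum_delta j k hjk x (fun z => D (x j, x k) (z j, z k) * kronPow n V z y)]
    simp only [Function.update_of_ne hjk, Function.update_self]
    refine Finset.sum_congr rfl fun a _ => Finset.sum_congr rfl fun b _ => ?_
    rw [kronPow, hsplit x a b (fun v t => V t (y v))]
  rw [hL, hR]
  have hmul : (∑ a : Fin s, ∑ b : Fin s, (V (x j) a * V (x k) b) * U (a, b) (y j, y k))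
      = ((V ⊗ₖ V) * U) (x j, x k) (y j, y k) := by
    rw [Matrix.mul_apply, Fintype.sum_prod_type]
    simp [Matrix.kroneckerMap_apply]
  have hmul2 : (∑ a : Fin s, ∑ b : Fin s, D (x j, x k) (a, b) * (V a (y j) * V b (y k)))
      = (D * (V ⊗ₖ V)) (x j, x k) (y j, y k) := by
    rw [Matrix.mul_apply, Fintype.sum_prod_type]
    simp [Matrix.kroneckerMap_apply]
  trans ((V ⊗ₖ V) * U) (x j, x k) (y j, y k) * C
  · rw [← hmul, Finset.sum_mul]
    refine Finset.sum_congr rfl fun a _ => ?_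
    rw [Finset.sum_mul]
    exact Finset.sum_congr rfl fun b _ => by ring
  · rw [hVVU, ← hmul2, Finset.sum_mul]
    refine Finset.sum_congr rfl fun a _ => ?_
    rw [Finset.sum_mul]
    exact Finset.sum_congr rfl fun b _ => by ring

theorem edge_layer_decomposition (s n : ℕ) (V : Matrix (Fin s) (Fin s) ℂ)
    (hV : Vᴴ * V = 1) (D : Matrix (Fin s × Fin s) (Fin s × Fin s) ℂ)
    (hDdiag : D.IsDiag) (hDunit : Dᴴ * D = 1)
    (U : Matrix (Fin s × Fin s) (Fin s × Fin s) ℂ)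
    (hU : U = (Vᴴ ⊗ₖ Vᴴ) * D * (V ⊗ₖ V))
    (l : List (Fin n × Fin n)) (hl : ∀ p ∈ l, p.1 ≠ p.2) :
    (l.map fun p => twoSite U p.1 p.2).prod =
      kronPow n Vᴴ * (l.map fun p => twoSite D p.1 p.2).prod * kronPow n V := by
  have hVV : V * Vᴴ = 1 := mul_eq_one_comm.mp hV
  have h1 : kronPow n Vᴴ * kronPow n V = 1 := by
    rw [kronPow_mul, hV, kronPow_one]
  have h2 : kronPow n V * kronPow n Vᴴ = 1 := by
    rw [kronPow_mul, hVV, kronPow_one]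
  have hTU : ∀ p : Fin n × Fin n, p.1 ≠ p.2 →
      twoSite U p.1 p.2 = kronPow n Vᴴ * twoSite D p.1 p.2 * kronPow n V := by
    intro p hp
    have := conj_eq p.1 p.2 hp V hVV D
    rw [← hU] at this
    calc twoSite U p.1 p.2 = (kronPow n Vᴴ * kronPow n V) * twoSite U p.1 p.2 := by
          rw [h1, Matrix.one_mul]
      _ = kronPow n Vᴴ * (kronPow n V * twoSite U p.1 p.2) := by rw [Matrix.mul_assoc]
      _ = kronPow n Vᴴ * (twoSite D p.1 p.2 * kronPow n V) := by rw [this]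
      _ = kronPow n Vᴴ * twoSite D p.1 p.2 * kronPow n V := by rw [Matrix.mul_assoc]
  induction l with
  | nil =>
    simp only [List.map_nil, List.prod_nil, Matrix.mul_one, h1]
  | cons p t ih =>
    have hp := hTU p (hl p List.mem_cons_self)
    rw [List.map_cons, List.prod_cons, List.map_cons, List.prod_cons,
      ih (fun q hq => hl q (List.mem_cons_of_mem p hq)), hp]
    have h2' : ∀ X : Matrix (Fin n → Fin s) (Fin n → Fin s) ℂ,
        kronPow n V * (kronPow n Vᴴ * X) = X := by
      intro X; rw [← Matrix.mul_assoc, h2, Matrix.one_mul]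
    simp only [Matrix.mul_assoc, h2']
end

section
/- Let s n : ℕ, let U : Matrix (Fin s × Fin s) (Fin s × Fin s) ℂ be an equivariantly diagonalizable unitary, and let j, k, l : Fin n be pairwise distinct. Then the embedded operators applied at overlapping edges commute: E_{j,k}(U) * E_{k,l}(U) = E_{k,l}(U) * E_{j,k}(U). -/
open scoped BigOperators Kronecker Matrix

/-- An equivariantly diagonalizable unitary (EDU): `U = (Vᴴ ⊗ Vᴴ) D (V ⊗ V)` for a
unitary `V` and a diagonal unitary `D`. -/
def IsEDU {s : ℕ} (U : Matrix (Fin s × Fin s) (Fin s × Fin s) ℂ) : Prop :=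
  ∃ (V : Matrix (Fin s) (Fin s) ℂ) (D : Matrix (Fin s × Fin s) (Fin s × Fin s) ℂ),
    Vᴴ * V = 1 ∧ D.IsDiag ∧ Dᴴ * D = 1 ∧ U = (Vᴴ ⊗ₖ Vᴴ) * D * (V ⊗ₖ V)

namespace EDUHelper

variable {s n : ℕ}

/-- Global product of one-site operators. -/
noncomputable def glob (n : ℕ) (V : Matrix (Fin s) (Fin s) ℂ) :
    Matrix (Fin n → Fin s) (Fin n → Fin s) ℂ := fun x y => ∏ u, V (x u) (y u)

lemma glob_mul (V W : Matrix (Fin s) (Fin s) ℂ) :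
    glob n V * glob n W = glob n (V * W) := by
  ext x y
  rw [Matrix.mul_apply]
  simp only [glob, Matrix.mul_apply]
  rw [Fintype.prod_sum (fun u c => V (x u) c * W c (y u))]
  refine Finset.sum_congr rfl fun z _ => ?_
  rw [← Finset.prod_mul_distrib]

lemma glob_one : glob n (1 : Matrix (Fin s) (Fin s) ℂ) = 1 := by
  ext x y
  simp only [glob]
  by_cases h : x = y
  · subst h; simp [Matrix.one_apply]
  · rw [Matrix.one_apply, if_neg h]
    obtain ⟨u, hu⟩ := Function.ne_iff.mp h
    exact Finset.prod_eq_zero (Finset.mem_univ u) (by rw [Matrix.one_apply, if_neg hu])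

lemma glob_conjTranspose (V : Matrix (Fin s) (Fin s) ℂ) :
    (glob n V)ᴴ = glob n Vᴴ := by
  ext x y
  simp [glob, Matrix.conjTranspose_apply, star_prod]

lemma prod_split (j k : Fin n) (hjk : j ≠ k) (g : Fin n → ℂ) :
    ∏ u, g u = g j * g k *
      ∏ u ∈ Finset.univ.filter (fun u => u ∉ ({j, k} : Finset (Fin n))), g u := by
  have h1 : Finset.univ.filter (fun u => u ∉ ({j, k} : Finset (Fin n)))
      = Finset.univ \ ({j, k} : Finset (Fin n)) := by
    ext u; simp
  rw [h1, ← Finset.prod_sdiff (Finset.subset_univ ({j, k} : Finset (Fin n))),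
    Finset.prod_pair hjk]
  ring

/-- auxiliary factor function -/
noncomputable def hfun (V : Matrix (Fin s) (Fin s) ℂ) (x y : Fin n → Fin s) (j k : Fin n)
    (p : Fin s × Fin s) (u : Fin n) (c : Fin s) : ℂ :=
  (starRingEnd ℂ) (V c (x u)) * V c (y u) *
    (if u = j then (if c = p.1 then 1 else 0)
     else if u = k then (if c = p.2 then 1 else 0) else 1)

lemma prod_hfun (V : Matrix (Fin s) (Fin s) ℂ) (x y : Fin n → Fin s) (j k : Fin n)
    (hjk : j ≠ k) (p : Fin s × Fin s) (z : Fin n → Fin s) :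
    ∏ u, hfun V x y j k p u (z u)
      = ((∏ u, (starRingEnd ℂ) (V (z u) (x u))) * ∏ u, V (z u) (y u)) *
        ((if z j = p.1 then (1 : ℂ) else 0) * (if z k = p.2 then 1 else 0)) := by
  simp only [hfun]
  rw [Finset.prod_mul_distrib, Finset.prod_mul_distrib]
  congr 1
  rw [prod_split j k hjk, if_pos rfl, if_neg hjk.symm, if_pos rfl]
  rw [Finset.prod_eq_one, mul_one]
  intro u hu
  simp only [Finset.mem_filter, Finset.mem_insert, Finset.mem_singleton] at hu
  push_neg at hu
  rw [if_neg hu.2.1, if_neg hu.2.2]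

lemma twoSite_conj (V : Matrix (Fin s) (Fin s) ℂ)
    (D : Matrix (Fin s × Fin s) (Fin s × Fin s) ℂ)
    (hV : Vᴴ * V = 1) (hD : D.IsDiag) (j k : Fin n) (hjk : j ≠ k) :
    twoSite ((Vᴴ ⊗ₖ Vᴴ) * D * (V ⊗ₖ V)) j k
      = glob n Vᴴ * Matrix.diagonal (fun x => D (x j, x k) (x j, x k)) * glob n V := by
  have hV' : ∀ a b : Fin s,
      (∑ c, (starRingEnd ℂ) (V c a) * V c b) = if a = b then (1 : ℂ) else 0 := by
    intro a b
    have : (∑ c, (starRingEnd ℂ) (V c a) * V c b) = (Vᴴ * V) a b := by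
      simp [Matrix.mul_apply, Matrix.conjTranspose_apply]
    rw [this, hV, Matrix.one_apply]
  have hU : ∀ a b : Fin s × Fin s, ((Vᴴ ⊗ₖ Vᴴ) * D * (V ⊗ₖ V)) a b
      = ∑ p : Fin s × Fin s, (starRingEnd ℂ) (V p.1 a.1) * (starRingEnd ℂ) (V p.2 a.2)
          * (D p p * (V p.1 b.1 * V p.2 b.2)) := by
    intro a b
    conv_lhs => rw [← hD.diagonal_diag]
    rw [Matrix.mul_assoc, Matrix.mul_apply]
    refine Finset.sum_congr rfl fun p _ => ?_
    rw [Matrix.diagonal_mul, Matrix.kroneckerMap_apply, Matrix.kroneckerMap_apply,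
      Matrix.conjTranspose_apply, Matrix.conjTranspose_apply]
    simp only [Matrix.diag, starRingEnd_apply]
    try ring
  ext x y
  conv_rhs => rw [Matrix.mul_assoc, Matrix.mul_apply]
  simp only [Matrix.diagonal_mul, glob, Matrix.conjTranspose_apply, ← starRingEnd_apply]
  -- rewrite RHS sum
  have step1 : ∀ z : Fin n → Fin s, D (z j, z k) (z j, z k)
      = ∑ p : Fin s × Fin s,
          (if z j = p.1 then (1 : ℂ) else 0) * ((if z k = p.2 then 1 else 0) * D p p) := by
    intro z
    rw [Fintype.sum_prod_type]
    simp
  have hsum : ∀ p : Fin s × Fin s, (∏ u, ∑ c, hfun V x y j k p u c)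
      = ((starRingEnd ℂ) (V p.1 (x j)) * V p.1 (y j))
        * ((starRingEnd ℂ) (V p.2 (x k)) * V p.2 (y k))
        * ∏ u ∈ Finset.univ.filter (fun u => u ∉ ({j, k} : Finset (Fin n))),
            (if x u = y u then (1 : ℂ) else 0) := by
    intro p
    rw [prod_split j k hjk]
    congr 1
    · congr 1
      · simp [hfun]
      · simp [hfun, hjk.symm]
    · refine Finset.prod_congr rfl fun u hu => ?_
      simp only [Finset.mem_filter, Finset.mem_insert, Finset.mem_singleton] at hu
      push_neg at hu
      simp only [hfun, if_neg hu.2.1, if_neg hu.2.2, mul_one]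
      exact hV' (x u) (y u)
  calc twoSite ((Vᴴ ⊗ₖ Vᴴ) * D * (V ⊗ₖ V)) j k x y
      = (∑ p : Fin s × Fin s, (starRingEnd ℂ) (V p.1 (x j)) * (starRingEnd ℂ) (V p.2 (x k))
          * (D p p * (V p.1 (y j) * V p.2 (y k))))
        * ∏ u ∈ Finset.univ.filter (fun u => u ∉ ({j, k} : Finset (Fin n))),
            (if x u = y u then (1 : ℂ) else 0) := by
        rw [twoSite, hU]
    _ = ∑ p : Fin s × Fin s, D p p * (∏ u, ∑ c, hfun V x y j k p u c) := by
        rw [Finset.sum_mul]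
        refine Finset.sum_congr rfl fun p _ => ?_
        rw [hsum p]
        ring
    _ = ∑ p : Fin s × Fin s, D p p * ∑ z : Fin n → Fin s, ∏ u, hfun V x y j k p u (z u) := by
        refine Finset.sum_congr rfl fun p _ => ?_
        rw [Fintype.prod_sum]
    _ = ∑ z : Fin n → Fin s, ∑ p : Fin s × Fin s, D p p * ∏ u, hfun V x y j k p u (z u) := by
        simp only [Finset.mul_sum]
        rw [Finset.sum_comm]
    _ = ∑ z : Fin n → Fin s, (∏ u, (starRingEnd ℂ) (V (z u) (x u)))
          * (D (z j, z k) (z j, z k) * ∏ u, V (z u) (y u)) := by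
        refine Finset.sum_congr rfl fun z _ => ?_
        rw [step1 z, Finset.sum_mul, Finset.mul_sum]
        refine Finset.sum_congr rfl fun p _ => ?_
        rw [prod_hfun V x y j k hjk p z]
        ring

end EDUHelper

theorem edu_overlapping_edges_commute (s n : ℕ)
    (U : Matrix (Fin s × Fin s) (Fin s × Fin s) ℂ) (hU : IsEDU U)
    (j k l : Fin n) (hjk : j ≠ k) (hkl : k ≠ l) (hjl : j ≠ l) :
    twoSite U j k * twoSite U k l = twoSite U k l * twoSite U j k := by
  obtain ⟨V, D, hV, hD, hDu, hUeq⟩ := hU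
  subst hUeq
  rw [EDUHelper.twoSite_conj V D hV hD j k hjk, EDUHelper.twoSite_conj V D hV hD k l hkl]
  have hW : EDUHelper.glob n V * EDUHelper.glob n Vᴴ = 1 := by
    rw [EDUHelper.glob_mul, mul_eq_one_comm.mp hV, EDUHelper.glob_one]
  set A := EDUHelper.glob n Vᴴ with hA
  set B := EDUHelper.glob n V with hB
  set d1 := Matrix.diagonal (fun x : Fin n → Fin s => D (x j, x k) (x j, x k)) with hd1
  set d2 := Matrix.diagonal (fun x : Fin n → Fin s => D (x k, x l) (x k, x l)) with hd2
  have hd : d1 * d2 = d2 * d1 := by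
    rw [hd1, hd2, Matrix.diagonal_mul_diagonal, Matrix.diagonal_mul_diagonal]
    exact congrArg Matrix.diagonal (funext fun i => mul_comm _ _)
  calc A * d1 * B * (A * d2 * B)
      = A * (d1 * ((B * A) * d2)) * B := by noncomm_ring
    _ = A * (d1 * d2) * B := by rw [hW, one_mul]
    _ = A * (d2 * d1) * B := by rw [hd]
    _ = A * (d2 * ((B * A) * d1)) * B := by rw [hW, one_mul]
    _ = A * d2 * B * (A * d1 * B) := by noncomm_ring
end

section
/- Let b : ℕ and let M = ZMod (2^b). The map f : (M × M) × (M × M) → (M × M) × (M × M) defined by f ((a₁,b₁),(a₂,b₂)) = ((a₁, b₁ + a₂), (a₂, b₂ + a₁)) is a bijection, and its permutation matrix P_f : Matrix ((M × M) × (M × M)) ((M × M) × (M × M)) ℂ (with P_f x y = if x = f y then 1 else 0) is an equivariantly diagonalizable unitary: there exist a unitary V₀ : Matrix M M ℂ and a diagonal unitary D : Matrix ((M × M) × (M × M)) ((M × M) × (M × M)) ℂ such that, setting W = (1 : Matrix M M ℂ) ⊗ₖ V₀, one has P_f = (Wᴴ ⊗ₖ Wᴴ) * D * (W ⊗ₖ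 W). Moreover P_f satisfies the undirected-symmetry condition S * P_f * S = P_f, where S is the swap matrix exchanging the two (M × M)-factors. -/
open scoped Kronecker Matrix

theorem addition_unitary_is_EDU (b : ℕ) :
    let M := ZMod (2 ^ b)
    let f : (M × M) × (M × M) → (M × M) × (M × M) :=
      fun p => ((p.1.1, p.1.2 + p.2.1), (p.2.1, p.2.2 + p.1.1))
    let Pf : Matrix ((M × M) × (M × M)) ((M × M) × (M × M)) ℂ :=
      fun x y => if x = f y then 1 else 0
    let S : Matrix ((M × M) × (M × M)) ((M × M) × (M × M)) ℂ :=
      fun p q => if p = Prod.swap q then 1 else 0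
    Function.Bijective f ∧
    (∃ (V₀ : Matrix M M ℂ) (D : Matrix ((M × M) × (M × M)) ((M × M) × (M × M)) ℂ),
      V₀ᴴ * V₀ = 1 ∧ D.IsDiag ∧ Dᴴ * D = 1 ∧
      (let W := (1 : Matrix M M ℂ) ⊗ₖ V₀
       Pf = (Wᴴ ⊗ₖ Wᴴ) * D * (W ⊗ₖ W))) ∧
    S * Pf * S = Pf := by
  intro M f Pf S
  haveI : NeZero (2 ^ b) := ⟨pow_ne_zero b two_ne_zero⟩
  set N : ℕ := 2 ^ b with hN
  let e : AddChar M ℂ := ZMod.stdAddChar (N := N)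
  have hmul : ∀ s t : M, e s * e t = e (s + t) := fun s t =>
    (AddChar.map_add_eq_mul e s t).symm
  have hconj : ∀ x : M, (starRingEnd ℂ) (e x) = e (-x) := by
    intro x
    have habs : ‖e x‖ = 1 := by
      show ‖ZMod.stdAddChar (N := N) x‖ = 1
      rw [ZMod.stdAddChar_apply]
      exact Circle.norm_coe _
    rw [← Complex.inv_eq_conj habs, ← AddChar.map_neg_eq_inv]
  have hnorm : ∀ x : M, (starRingEnd ℂ) (e x) * e x = 1 := by
    intro x
    rw [hconj, hmul, neg_add_cancel, AddChar.map_zero_eq_one]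
  have hsum : ∀ t : M, ∑ l : M, e (l * t) = if t = 0 then (N : ℂ) else 0 := by
    intro t
    split_ifs with h
    · have hcard : Fintype.card M = N := ZMod.card N
      simp [h, Finset.card_univ, hcard]
    · have h0 : ∑ l : M, (e.mulShift t) l = 0 :=
        AddChar.sum_eq_zero_of_ne_one (ZMod.isPrimitive_stdAddChar N h)
      calc ∑ l : M, e (l * t) = ∑ l : M, (e.mulShift t) l := by
            refine Finset.sum_congr rfl fun l _ => ?_
            rw [AddChar.mulShift_apply, mul_comm]
        _ = 0 := h0
  set c : ℂ := ((Real.sqrt N : ℝ) : ℂ)⁻¹ with hc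
  have hcconj : (starRingEnd ℂ) c = c := by
    rw [hc, map_inv₀, Complex.conj_ofReal]
  have hcc : c * c * (N : ℂ) = 1 := by
    rw [hc, ← mul_inv]
    rw [← Complex.ofReal_mul, Real.mul_self_sqrt (Nat.cast_nonneg N)]
    rw [show ((N : ℝ) : ℂ) = (N : ℂ) by push_cast; ring]
    rw [inv_mul_cancel₀ (by exact_mod_cast (NeZero.ne N))]
  set V₀ : Matrix M M ℂ := Matrix.of fun j k => c * e (j * k) with hV₀def
  set g : (M × M) × (M × M) → ℂ := fun p => e (p.2.1 * p.1.2 + p.1.1 * p.2.2) with hg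
  set D : Matrix ((M × M) × (M × M)) ((M × M) × (M × M)) ℂ :=
    Matrix.of fun p q => if p = q then g p else 0 with hD
  have hV : V₀ᴴ * V₀ = 1 := by
    ext j k
    rw [Matrix.mul_apply, Matrix.one_apply]
    calc ∑ l : M, V₀ᴴ j l * V₀ l k
        = ∑ l : M, (c * c) * e (l * (k - j)) := by
          refine Finset.sum_congr rfl fun l _ => ?_
          rw [Matrix.conjTranspose_apply, hV₀def, Matrix.of_apply, Matrix.of_apply,
            star_mul', Complex.star_def, hcconj, hconj,
            show l * (k - j) = -(l * j) + l * k by ring, ← hmul]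
          ring
      _ = (c * c) * ∑ l : M, e (l * (k - j)) := by rw [← Finset.mul_sum]
      _ = if j = k then 1 else 0 := by
          rw [hsum]
          by_cases hjk : j = k
          · simp [hjk, hcc]
          · have h1 : k - j ≠ 0 := sub_ne_zero.mpr (Ne.symm hjk)
            simp [hjk, h1]
  refine ⟨?_, ⟨V₀, D, hV, ?_, ?_, ?_⟩, ?_⟩
  · -- Bijective
    refine Function.bijective_iff_has_inverse.mpr
      ⟨fun p => ((p.1.1, p.1.2 - p.2.1), (p.2.1, p.2.2 - p.1.1)), fun p => ?_, fun p => ?_⟩ <;>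
      · obtain ⟨⟨a₁, b₁⟩, ⟨a₂, b₂⟩⟩ := p
        simp [f]
  · -- IsDiag
    intro i j h
    simp [hD, h]
  · -- Dᴴ * D = 1
    ext p q
    rw [Matrix.mul_apply, Matrix.one_apply]
    have hterm : ∀ r, Dᴴ p r * D r q =
        if r = p then (if p = q then (1 : ℂ) else 0) else 0 := by
      intro r
      rw [Matrix.conjTranspose_apply, hD, Matrix.of_apply, Matrix.of_apply]
      by_cases h1 : r = p
      · subst h1
        by_cases h2 : r = q
        · subst h2
          simp [hnorm]
          exact hnorm _
        · simp [h2]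
      · simp [h1]
    simp only [hterm]
    simp [Finset.sum_ite_eq']
  · -- main identity
    intro W
    have hWH : Wᴴ = (1 : Matrix M M ℂ) ⊗ₖ V₀ᴴ := by
      show ((1 : Matrix M M ℂ) ⊗ₖ V₀)ᴴ = _
      ext ⟨x1, x2⟩ ⟨y1, y2⟩
      simp only [Matrix.conjTranspose_apply, Matrix.kroneckerMap_apply, star_mul',
        Matrix.one_apply]
      by_cases h : y1 = x1
      · subst h; simp
      · simp [h, Ne.symm h]
    have hWunit : Wᴴ * W = 1 := by
      rw [hWH]
      rw [show W = (1 : Matrix M M ℂ) ⊗ₖ V₀ from rfl]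
      rw [← Matrix.mul_kronecker_mul, one_mul, hV, Matrix.one_kronecker_one]
    have hkey : (W ⊗ₖ W) * Pf = D * (W ⊗ₖ W) := by
      ext x y
      rw [Matrix.mul_apply, Matrix.mul_apply]
      have hL : ∀ z, (W ⊗ₖ W) x z * Pf z y =
          if z = f y then (W ⊗ₖ W) x z else 0 := by
        intro z
        show (W ⊗ₖ W) x z * (if z = f y then (1 : ℂ) else 0) =
          if z = f y then (W ⊗ₖ W) x z else 0
        split_ifs <;> simp
      have hR : ∀ z, D x z * (W ⊗ₖ W) z y =
          if x = z then g x * (W ⊗ₖ W) z y else 0 := by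
        intro z
        show (if x = z then g x else 0) * (W ⊗ₖ W) z y =
          if x = z then g x * (W ⊗ₖ W) z y else 0
        split_ifs <;> simp
      simp only [hL, hR, Finset.sum_ite_eq', Finset.sum_ite_eq, Finset.mem_univ, if_true]
      obtain ⟨⟨u₁, k₁⟩, ⟨u₂, k₂⟩⟩ := x
      obtain ⟨⟨c₁, d₁⟩, ⟨c₂, d₂⟩⟩ := y
      show (W ⊗ₖ W) ((u₁, k₁), (u₂, k₂)) ((c₁, d₁ + c₂), (c₂, d₂ + c₁)) =
        e (u₂ * k₁ + u₁ * k₂) * (W ⊗ₖ W) ((u₁, k₁), (u₂, k₂)) ((c₁, d₁), (c₂, d₂))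
      rw [show W = (1 : Matrix M M ℂ) ⊗ₖ V₀ from rfl]
      simp only [Matrix.kroneckerMap_apply, Matrix.one_apply, Matrix.of_apply]
      by_cases h1 : u₁ = c₁
      · by_cases h2 : u₂ = c₂
        · subst h1; subst h2
          rw [hV₀def]
          have key : e (k₁ * (d₁ + u₂)) * e (k₂ * (d₂ + u₁)) =
              e (u₂ * k₁ + u₁ * k₂) * (e (k₁ * d₁) * e (k₂ * d₂)) := by
            simp only [hmul]
            exact congrArg e (by ring)
          simp only [Matrix.of_apply, eq_self_iff_true, if_true, one_mul]
          linear_combination c * c * key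
        · simp [h2]
      · simp [h1]
    have hWW : (Wᴴ ⊗ₖ Wᴴ) * (W ⊗ₖ W) = 1 := by
      rw [← Matrix.mul_kronecker_mul, hWunit, Matrix.one_kronecker_one]
    calc Pf = 1 * Pf := (one_mul _).symm
      _ = ((Wᴴ ⊗ₖ Wᴴ) * (W ⊗ₖ W)) * Pf := by rw [hWW]
      _ = (Wᴴ ⊗ₖ Wᴴ) * ((W ⊗ₖ W) * Pf) := by rw [mul_assoc]
      _ = (Wᴴ ⊗ₖ Wᴴ) * (D * (W ⊗ₖ W)) := by rw [hkey]
      _ = (Wᴴ ⊗ₖ Wᴴ) * D * (W ⊗ₖ W) := by rw [mul_assoc]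
  · -- symmetry
    have hSl : ∀ (A : Matrix ((M × M) × (M × M)) ((M × M) × (M × M)) ℂ) x y,
        (S * A) x y = A (Prod.swap x) y := by
      intro A x y
      rw [Matrix.mul_apply]
      have hterm : ∀ z, S x z * A z y = if z = Prod.swap x then A z y else 0 := by
        intro z
        show (if x = Prod.swap z then (1 : ℂ) else 0) * A z y =
          if z = Prod.swap x then A z y else 0
        by_cases h : z = Prod.swap x
        · subst h; simp
        · have hx : x ≠ Prod.swap z := by
            intro hx; exact h (by rw [hx, Prod.swap_swap])
          simp [h, hx]
      simp only [hterm, Finset.sum_ite_eq', Finset.mem_univ, if_true]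
    have hSr : ∀ (A : Matrix ((M × M) × (M × M)) ((M × M) × (M × M)) ℂ) x y,
        (A * S) x y = A x (Prod.swap y) := by
      intro A x y
      rw [Matrix.mul_apply]
      have hterm : ∀ z, A x z * S z y = if z = Prod.swap y then A x z else 0 := by
        intro z
        show A x z * (if z = Prod.swap y then (1 : ℂ) else 0) =
          if z = Prod.swap y then A x z else 0
        split_ifs <;> simp
      simp only [hterm, Finset.sum_ite_eq', Finset.mem_univ, if_true]
    ext x y
    rw [hSr, hSl]
    obtain ⟨⟨u₁, k₁⟩, ⟨u₂, k₂⟩⟩ := x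
    obtain ⟨⟨c₁, d₁⟩, ⟨c₂, d₂⟩⟩ := y
    show (if ((u₂, k₂), (u₁, k₁)) = ((c₂, d₂ + c₁), (c₁, d₁ + c₂)) then (1 : ℂ) else 0) =
      (if ((u₁, k₁), (u₂, k₂)) = ((c₁, d₁ + c₂), (c₂, d₂ + c₁)) then 1 else 0)
    refine if_congr ?_ rfl rfl
    constructor <;> · intro h; simp only [Prod.mk.injEq] at h ⊢; tauto
end

section
/- For every countable type X and every k : ℕ, there exists a function c : X → ℝ such that the sum-aggregation map on bounded multisets is injective: for all multisets m₁ m₂ : Multiset X with m₁.card ≤ k and m₂.card ≤ k, if (m₁.map c).sum = (m₂.map c).sum then m₁ = m₂. -/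
open Multiset

private lemma gin_aux_lt (k : ℕ) (t : Multiset ℕ) (n : ℕ) (hcard : Multiset.card t ≤ k)
    (hall : ∀ m ∈ t, n < m) :
    (t.map fun m => (((k:ℝ)+1)⁻¹)^m).sum < (((k:ℝ)+1)⁻¹)^n := by
  set r : ℝ := ((k:ℝ)+1)⁻¹ with hr
  have hk1 : (0:ℝ) < (k:ℝ)+1 := by positivity
  have hr0 : 0 < r := by positivity
  have hr1 : r ≤ 1 := by
    rw [hr, inv_le_one₀ hk1]
    linarith
  have hb : ∀ x ∈ t.map fun m => r^m, x ≤ r^(n+1) := by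
    intro x hx
    obtain ⟨m, hm, rfl⟩ := Multiset.mem_map.mp hx
    exact pow_le_pow_of_le_one hr0.le hr1 (hall m hm)
  have h1 : (t.map fun m => r^m).sum ≤ (Multiset.card (t.map fun m => r^m)) • r^(n+1) :=
    Multiset.sum_le_card_nsmul _ _ hb
  rw [Multiset.card_map, nsmul_eq_mul] at h1
  have h2 : (Multiset.card t : ℝ) * r^(n+1) ≤ (k:ℝ) * r^(n+1) := by
    apply mul_le_mul_of_nonneg_right _ (by positivity)
    exact_mod_cast hcard
  have h3 : (k:ℝ) * r^(n+1) < r^n := by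
    have : (k:ℝ) * r < 1 := by
      rw [hr, mul_inv_lt_iff₀ hk1]
      linarith
    calc (k:ℝ) * r^(n+1) = ((k:ℝ) * r) * r^n := by ring
    _ < 1 * r^n := by
        apply mul_lt_mul_of_pos_right this (by positivity)
    _ = r^n := one_mul _
  linarith

private lemma gin_key (k : ℕ) (s t : Multiset ℕ) (hs : Multiset.card s ≤ k)
    (ht : Multiset.card t ≤ k) (hd : ∀ n, n ∈ s → n ∉ t)
    (hsum : (s.map fun m => (((k:ℝ)+1)⁻¹)^m).sum = (t.map fun m => (((k:ℝ)+1)⁻¹)^m).sum) :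
    s = 0 ∧ t = 0 := by
  set r : ℝ := ((k:ℝ)+1)⁻¹ with hr
  have hr0 : (0:ℝ) < r := by positivity
  by_contra h
  have hne : s + t ≠ 0 := by
    intro h0
    simp only [Multiset.card_eq_zero.symm, Multiset.card_add, Nat.add_eq_zero] at h0
    exact h ⟨Multiset.card_eq_zero.mp h0.1, Multiset.card_eq_zero.mp h0.2⟩
  have hfs : (s + t).toFinset.Nonempty := by
    rw [Multiset.toFinset_nonempty]
    exact hne
  set n := (s + t).toFinset.min' hfs with hndef
  have hnmem : n ∈ s + t := by
    have := (s + t).toFinset.min'_mem hfs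
    rwa [Multiset.mem_toFinset] at this
  have hmin : ∀ m ∈ s + t, n ≤ m := by
    intro m hm
    exact (s + t).toFinset.min'_le m (Multiset.mem_toFinset.mpr hm)
  have hge : ∀ (a b : Multiset ℕ), n ∈ a → (∀ m ∈ b, n < m) → Multiset.card b ≤ k →
      (b.map fun m => r^m).sum < (a.map fun m => r^m).sum := by
    intro a b hna hb hbc
    refine lt_of_lt_of_le (gin_aux_lt k b n hbc hb) ?_
    refine Multiset.single_le_sum ?_ _ ?_
    · intro x hx
      obtain ⟨m, _, rfl⟩ := Multiset.mem_map.mp hx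
      positivity
    · exact Multiset.mem_map.mpr ⟨n, hna, rfl⟩
  rcases Multiset.mem_add.mp hnmem with hns | hnt
  · have hb : ∀ m ∈ t, n < m := by
      intro m hm
      rcases lt_or_eq_of_le (hmin m (Multiset.mem_add.mpr (Or.inr hm))) with h' | h'
      · exact h'
      · exact absurd hm (h' ▸ hd n hns)
    exact absurd hsum (ne_of_gt (hge s t hns hb ht))
  · have hb : ∀ m ∈ s, n < m := by
      intro m hm
      rcases lt_or_eq_of_le (hmin m (Multiset.mem_add.mpr (Or.inl hm))) with h' | h'
      · exact h'
      · exact absurd hnt (hd n (h' ▸ hm))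
    exact absurd hsum (ne_of_lt (hge t s hnt hb hs))

private lemma gin_key2 (k : ℕ) (s t : Multiset ℕ) (hs : Multiset.card s ≤ k)
    (ht : Multiset.card t ≤ k)
    (hsum : (s.map fun m => (((k:ℝ)+1)⁻¹)^m).sum = (t.map fun m => (((k:ℝ)+1)⁻¹)^m).sum) :
    s = t := by
  have h1 : s - t + s ∩ t = s := Multiset.sub_add_inter s t
  have h2 : t - s + t ∩ s = t := Multiset.sub_add_inter t s
  have hic : s ∩ t = t ∩ s := Multiset.inter_comm s t
  have hsum' : ((s - t).map fun m => (((k:ℝ)+1)⁻¹)^m).sum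
      = ((t - s).map fun m => (((k:ℝ)+1)⁻¹)^m).sum := by
    have e1 := congrArg (fun u : Multiset ℕ => (u.map fun m => (((k:ℝ)+1)⁻¹)^m).sum) h1
    have e2 := congrArg (fun u : Multiset ℕ => (u.map fun m => (((k:ℝ)+1)⁻¹)^m).sum) h2
    simp only [Multiset.map_add, Multiset.sum_add] at e1 e2
    rw [hic] at e1
    linarith [e1, e2, hsum]
  have hd : ∀ n, n ∈ s - t → n ∉ t - s := by
    intro n hn1 hn2
    rw [← Multiset.count_pos, Multiset.count_sub] at hn1 hn2
    omega
  have hcs : Multiset.card (s - t) ≤ k :=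
    le_trans (Multiset.card_le_card (Multiset.sub_le_self s t)) hs
  have hct : Multiset.card (t - s) ≤ k :=
    le_trans (Multiset.card_le_card (Multiset.sub_le_self t s)) ht
  obtain ⟨e1, e2⟩ := gin_key k (s - t) (t - s) hcs hct hd hsum'
  exact le_antisymm (tsub_eq_zero_iff_le.mp e1) (tsub_eq_zero_iff_le.mp e2)

theorem sum_aggregation_injective_on_bounded_multisets
    (X : Type*) [Countable X] (k : ℕ) :
    ∃ c : X → ℝ, ∀ m₁ m₂ : Multiset X, Multiset.card m₁ ≤ k → Multiset.card m₂ ≤ k →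
      (m₁.map c).sum = (m₂.map c).sum → m₁ = m₂ := by
  obtain ⟨f, hf⟩ := Countable.exists_injective_nat X
  refine ⟨fun x => (((k:ℝ)+1)⁻¹)^(f x), fun m₁ m₂ h₁ h₂ hsum => ?_⟩
  have hmap : m₁.map f = m₂.map f := by
    apply gin_key2 k (m₁.map f) (m₂.map f)
    · simpa using h₁
    · simpa using h₂
    · simpa [Multiset.map_map, Function.comp] using hsum
  exact Multiset.map_injective hf hmap
end

section
/- Let G₁ and G₂ be connected simple graphs on finite vertex types V₁ and V₂ with Fintype.card V₁ = Fintype.card V₂ = n, and let h₁ : V₁ → L and h₂ : V₂ → L be injective feature maps into a type L. If there exist vertices v₁ : V₁ and v₂ : V₂ such that the level-n trees agree, T(G₁, v₁, n) = T(G₂, v₂, n), then there exists a graph isomorphism φ : G₁ ≃g G₂, and φ can be chosen to be label-preserving, i.e. h₂ (φ v) = h₁ v for all v : V₁. Equivalently: if connected n-vertex graphs G₁ and G₂ with injective feature maps are not isomorphic, then T(G₁, v₁, n) ≠ T(G₂, v₂, n) for all v₁, v₂. -/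
universe u

/-- The type of level-`k` trees: a level-`0` tree is a multiset of labels, and a
level-`(k+1)` tree is a label together with a multiset of level-`k` trees. -/
def TreeT (L : Type u) : ℕ → Type u
  | 0 => Multiset L
  | k + 1 => L × Multiset (TreeT L k)

/-- The level-`k` tree of a node `u`: `T (G, u, 0) = leaf {h u}` and
`T (G, u, k+1) = node (h u) {T (G, w, k) | w ∈ N(u)}`. -/
noncomputable def levelTree {V L : Type u} [Fintype V] (G : SimpleGraph V) (h : V → L) :
    (k : ℕ) → V → TreeT L k
  | 0, u => ({h u} : Multiset L)
  | k + 1, u =>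
    letI : DecidableRel G.Adj := Classical.decRel _
    ((h u, (G.neighborFinset u).val.map (levelTree G h k)) : L × Multiset (TreeT L k))

noncomputable def nbrsAux {V : Type u} [Fintype V] (G : SimpleGraph V) (u : V) : Multiset V :=
  letI : DecidableRel G.Adj := Classical.decRel _
  (G.neighborFinset u).val

lemma mem_nbrsAux {V : Type u} [Fintype V] (G : SimpleGraph V) (u a : V) :
    a ∈ nbrsAux G u ↔ G.Adj u a := by simp [nbrsAux]

lemma levelTree_zero {V L : Type u} [Fintype V] (G : SimpleGraph V) (h : V → L) (u : V) :
    levelTree G h 0 u = ({h u} : Multiset L) := rfl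

lemma levelTree_succ {V L : Type u} [Fintype V] (G : SimpleGraph V) (h : V → L) (k : ℕ) (u : V) :
    levelTree G h (k+1) u
      = ((h u, (nbrsAux G u).map (levelTree G h k)) : L × Multiset (TreeT L k)) := rfl

lemma map_congr_rel {α β γ γ' : Type u} {s : Multiset α} {t : Multiset β}
    {f : α → γ} {g : β → γ} {f' : α → γ'} {g' : β → γ'}
    (h : s.map f = t.map g)
    (step : ∀ a ∈ s, ∀ b ∈ t, f a = g b → f' a = g' b) :
    s.map f' = t.map g' := by
  rw [← Multiset.rel_eq] at h ⊢
  rw [Multiset.rel_map] at h ⊢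
  exact h.mono step

section Lemmas
variable {V₁ V₂ L : Type} [Fintype V₁] [Fintype V₂]
  (G₁ : SimpleGraph V₁) (G₂ : SimpleGraph V₂) (h₁ : V₁ → L) (h₂ : V₂ → L)

lemma label_eq : ∀ (k : ℕ) (u : V₁) (w : V₂),
    levelTree G₁ h₁ k u = levelTree G₂ h₂ k w → h₁ u = h₂ w := by
  intro k u w H
  cases k with
  | zero =>
    rw [levelTree_zero, levelTree_zero] at H
    exact Multiset.singleton_inj.mp H
  | succ k =>
    rw [levelTree_succ, levelTree_succ] at H
    exact congrArg Prod.fst H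

lemma nbr_eq : ∀ (k : ℕ) (u : V₁) (w : V₂),
    levelTree G₁ h₁ (k+1) u = levelTree G₂ h₂ (k+1) w →
      (nbrsAux G₁ u).map (levelTree G₁ h₁ k) = (nbrsAux G₂ w).map (levelTree G₂ h₂ k) := by
  intro k u w H
  rw [levelTree_succ, levelTree_succ] at H
  exact congrArg Prod.snd H

lemma level_down : ∀ (k : ℕ) (u : V₁) (w : V₂),
    levelTree G₁ h₁ (k+1) u = levelTree G₂ h₂ (k+1) w →
      levelTree G₁ h₁ k u = levelTree G₂ h₂ k w := by
  intro k
  induction k with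
  | zero =>
    intro u w H
    rw [levelTree_zero, levelTree_zero]; refine Multiset.singleton_inj.mpr ?_
    exact label_eq G₁ G₂ h₁ h₂ 1 u w H
  | succ k ih =>
    intro u w H
    rw [levelTree_succ, levelTree_succ]
    have hl := label_eq G₁ G₂ h₁ h₂ (k+2) u w H
    have hn := nbr_eq G₁ G₂ h₁ h₂ (k+1) u w H
    have : (nbrsAux G₁ u).map (levelTree G₁ h₁ k) = (nbrsAux G₂ w).map (levelTree G₂ h₂ k) :=
      map_congr_rel hn (fun a _ b _ hab => ih a b hab)
    rw [hl, this]

lemma level_mono : ∀ (j m : ℕ), j ≤ m → ∀ (u : V₁) (w : V₂),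
    levelTree G₁ h₁ m u = levelTree G₂ h₂ m w →
      levelTree G₁ h₁ j u = levelTree G₂ h₂ j w := by
  intro j m hjm
  induction m with
  | zero => intro u w H; obtain rfl := Nat.le_zero.mp hjm; exact H
  | succ m ih =>
    intro u w H
    rcases Nat.lt_or_ge j (m+1) with hlt | hge
    · exact ih (Nat.lt_succ_iff.mp hlt) u w (level_down G₁ G₂ h₁ h₂ m u w H)
    · obtain rfl := le_antisymm hjm hge; exact H

lemma level_up (k : ℕ)
    (hstep : ∀ (u : V₁) (w : V₂),
      levelTree G₁ h₁ k u = levelTree G₂ h₂ k w →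
        levelTree G₁ h₁ (k+1) u = levelTree G₂ h₂ (k+1) w) :
    ∀ (u : V₁) (w : V₂),
    levelTree G₁ h₁ (k+1) u = levelTree G₂ h₂ (k+1) w →
      levelTree G₁ h₁ (k+2) u = levelTree G₂ h₂ (k+2) w := by
  intro u w H
  rw [levelTree_succ, levelTree_succ]
  have hl := label_eq G₁ G₂ h₁ h₂ (k+1) u w H
  have hn := nbr_eq G₁ G₂ h₁ h₂ k u w H
  have : (nbrsAux G₁ u).map (levelTree G₁ h₁ (k+1))
      = (nbrsAux G₂ w).map (levelTree G₂ h₂ (k+1)) :=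
    map_congr_rel hn (fun a _ b _ hab => hstep a b hab)
  rw [hl, this]

end Lemmas

theorem level_n_tree_determines_iso_class
    {V₁ V₂ L : Type} [Fintype V₁] [Fintype V₂]
    (G₁ : SimpleGraph V₁) (G₂ : SimpleGraph V₂) (n : ℕ)
    (hc₁ : Fintype.card V₁ = n) (hc₂ : Fintype.card V₂ = n)
    (hG₁ : G₁.Connected) (hG₂ : G₂.Connected)
    (h₁ : V₁ → L) (h₂ : V₂ → L)
    (hi₁ : Function.Injective h₁) (hi₂ : Function.Injective h₂)
    (v₁ : V₁) (v₂ : V₂)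
    (hT : levelTree G₁ h₁ n v₁ = levelTree G₂ h₂ n v₂) :
    ∃ φ : G₁ ≃g G₂, ∀ v : V₁, h₂ (φ v) = h₁ v := by
  classical
  set R : ℕ → V₁ → V₂ → Prop :=
    fun k u w => levelTree G₁ h₁ k u = levelTree G₂ h₂ k w with hR
  -- functionality
  have fun₂ : ∀ {k u w w'}, R k u w → R k u w' → w = w' := by
    intro k u w w' h h'
    exact hi₂ ((label_eq G₁ G₂ h₁ h₂ k u w h).symm.trans (label_eq G₁ G₂ h₁ h₂ k u w' h'))
  have fun₁ : ∀ {k u u' w}, R k u w → R k u' w → u = u' := by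
    intro k u u' w h h'
    exact hi₁ ((label_eq G₁ G₂ h₁ h₂ k u w h).trans (label_eq G₁ G₂ h₁ h₂ k u' w h').symm)
  -- the finsets
  set S : ℕ → Finset (V₁ × V₂) :=
    fun k => Finset.univ.filter (fun p => R k p.1 p.2) with hS
  have hmemS : ∀ k p, p ∈ S k ↔ R k p.1 p.2 := by
    intro k p; simp [hS]
  have hanti : ∀ k, S (k+1) ⊆ S k := by
    intro k p hp
    rw [hmemS] at hp ⊢
    exact level_down G₁ G₂ h₁ h₂ k p.1 p.2 hp
  have hcard : ∀ k, (S k).card ≤ n := by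
    intro k
    have : (S k).card ≤ (Finset.univ : Finset V₁).card := by
      apply Finset.card_le_card_of_injOn Prod.fst (fun p _ => Finset.mem_univ _)
      intro p hp q hq hpq
      rw [Finset.mem_coe, hmemS] at hp hq
      have : p.2 = q.2 := fun₂ (hpq ▸ hp) hq
      exact Prod.ext hpq this
    simpa [hc₁] using this
  have hSn : (v₁, v₂) ∈ S n := (hmemS n _).mpr hT
  -- stabilization
  have hstab : ∃ k < n, S k = S (k+1) := by
    by_contra hcon
    push_neg at hcon
    have hdec : ∀ k < n, (S (k+1)).card < (S k).card := by
      intro k hk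
      exact Finset.card_lt_card (lt_of_le_of_ne (hanti k) (fun e => hcon k hk e.symm))
    have key : ∀ k ≤ n, (S k).card + k ≤ (S 0).card := by
      intro k
      induction k with
      | zero => intro; simp
      | succ k ih =>
        intro hk
        have h1 := hdec k hk
        have h2 := ih (Nat.le_of_succ_le hk)
        omega
    have h1 := key n le_rfl
    have h2 := hcard 0
    have h3 : 1 ≤ (S n).card := Finset.card_pos.mpr ⟨_, hSn⟩
    have h4 : 1 ≤ n := by
      have := Fintype.card_pos_iff.mpr ⟨v₁⟩
      omega
    omega
  obtain ⟨k, hkn, hSk⟩ := hstab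
  have hstep : ∀ u w, R k u w → R (k+1) u w := by
    intro u w h
    have : (u, w) ∈ S k := (hmemS k _).mpr h
    rw [hSk] at this
    exact (hmemS (k+1) _).mp this
  -- propagates upward
  have hup : ∀ j, k ≤ j → ∀ u w, R j u w → R (j+1) u w := by
    intro j hj
    induction j, hj using Nat.le_induction with
    | base => exact hstep
    | succ j hj ih => exact level_up G₁ G₂ h₁ h₂ j ih
  have hRk : R k v₁ v₂ := level_mono G₁ G₂ h₁ h₂ k n (le_of_lt hkn) v₁ v₂ hT
  -- neighbor closure
  have closure₁ : ∀ u w u', R k u w → G₁.Adj u u' → ∃ w', G₂.Adj w w' ∧ R k u' w' := by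
    intro u w u' h hadj
    have h' := hup k le_rfl u w h
    have hn := nbr_eq G₁ G₂ h₁ h₂ k u w h'
    have hm : levelTree G₁ h₁ k u' ∈ (nbrsAux G₂ w).map (levelTree G₂ h₂ k) := by
      rw [← hn]
      exact Multiset.mem_map_of_mem _ ((mem_nbrsAux G₁ u u').mpr hadj)
    obtain ⟨w', hw'mem, hw'⟩ := Multiset.mem_map.mp hm
    exact ⟨w', (mem_nbrsAux G₂ w w').mp hw'mem, hw'.symm⟩
  have closure₂ : ∀ u w w', R k u w → G₂.Adj w w' → ∃ u', G₁.Adj u u' ∧ R k u' w' := by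
    intro u w w' h hadj
    have h' := hup k le_rfl u w h
    have hn := nbr_eq G₁ G₂ h₁ h₂ k u w h'
    have hm : levelTree G₂ h₂ k w' ∈ (nbrsAux G₁ u).map (levelTree G₁ h₁ k) := by
      rw [hn]
      exact Multiset.mem_map_of_mem _ ((mem_nbrsAux G₂ w w').mpr hadj)
    obtain ⟨u', hu'mem, hu'⟩ := Multiset.mem_map.mp hm
    exact ⟨u', (mem_nbrsAux G₁ u u').mp hu'mem, hu'⟩
  -- totality
  have total₁ : ∀ u, ∃ w, R k u w := by
    have walkstep : ∀ {a b : V₁} (_ : G₁.Walk a b), (∃ w, R k a w) → ∃ w, R k b w := by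
      intro a b p
      induction p with
      | nil => exact id
      | cons hadj p ih =>
        intro ⟨w, hw⟩
        obtain ⟨w', _, hw'⟩ := closure₁ _ _ _ hw hadj
        exact ih ⟨w', hw'⟩
    intro u
    obtain ⟨p⟩ := hG₁.preconnected v₁ u
    exact walkstep p ⟨v₂, hRk⟩
  have total₂ : ∀ w, ∃ u, R k u w := by
    have walkstep : ∀ {a b : V₂} (_ : G₂.Walk a b), (∃ u, R k u a) → ∃ u, R k u b := by
      intro a b p
      induction p with
      | nil => exact id
      | cons hadj p ih =>
        intro ⟨u, hu⟩
        obtain ⟨u', _, hu'⟩ := closure₂ _ _ _ hu hadj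
        exact ih ⟨u', hu'⟩
    intro w
    obtain ⟨p⟩ := hG₂.preconnected v₂ w
    exact walkstep p ⟨v₁, hRk⟩
  -- the bijection
  choose f hf using total₁
  have hinj : Function.Injective f := by
    intro u u' he
    exact fun₁ (hf u) (he ▸ hf u')
  have hsurj : Function.Surjective f := by
    intro w
    obtain ⟨u, hu⟩ := total₂ w
    exact ⟨u, fun₂ (hf u) hu⟩
  let e : V₁ ≃ V₂ := Equiv.ofBijective f ⟨hinj, hsurj⟩
  have hadj_iff : ∀ u u', G₂.Adj (f u) (f u') ↔ G₁.Adj u u' := by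
    intro u u'
    constructor
    · intro h
      obtain ⟨u'', hu''adj, hu''⟩ := closure₂ u (f u) (f u') (hf u) h
      have : u'' = u' := fun₁ hu'' (hf u')
      exact this ▸ hu''adj
    · intro h
      obtain ⟨w', hw'adj, hw'⟩ := closure₁ u (f u) u' (hf u) h
      have : w' = f u' := fun₂ hw' (hf u')
      exact this ▸ hw'adj
  refine ⟨⟨e, ?_⟩, ?_⟩
  · intro u u'
    exact hadj_iff u u'
  · intro u
    exact (label_eq G₁ G₂ h₁ h₂ k u (f u) (hf u)).symm
end

section
/- Let n : ℕ. A matrix L : Matrix (Fin n → Bool) (Fin n → Bool) ℂ is permutation-equivariant if and only if there exists a function w : ℕ × ℕ × ℕ → ℂ such that for all x y : Fin n → Bool, L x y = w (card {v | y v = true}, card {v | x v = true ∧ y v = true}, card {v | x v = true ∧ y v = false}). That is, L is equivariant exactly when the entry ⟨x| L |y⟩ depends only on the number i of ones in the input y, the number j of ones of x at positions where y has a one, and the number k of ones of x at positions where y has a zero. -/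
open Finset

private lemma exists_perm_comp {n : ℕ} {β : Type*} [DecidableEq β] (f g : Fin n → β)
    (h : ∀ b, (univ.filter fun a => f a = b).card = (univ.filter fun a => g a = b).card) :
    ∃ σ : Equiv.Perm (Fin n), ∀ a, g (σ a) = f a := by
  have hc : ∀ b, Fintype.card {a // f a = b} = Fintype.card {a // g a = b} := by
    intro b
    simp only [Fintype.card_subtype]
    exact h b
  let e : ∀ b, {a // f a = b} ≃ {a // g a = b} := fun b => Fintype.equivOfCardEq (hc b)
  refine ⟨(Equiv.sigmaFiberEquiv f).symm.trans
    ((Equiv.sigmaCongrRight e).trans (Equiv.sigmaFiberEquiv g)), ?_⟩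
  intro a
  exact (e (f a) ⟨a, rfl⟩).2

private lemma card_split {n : ℕ} (p q : Fin n → Prop) [DecidablePred p] [DecidablePred q] :
    (univ.filter fun v => p v ∧ q v).card + (univ.filter fun v => ¬ p v ∧ q v).card
      = (univ.filter q).card := by
  have := Finset.card_filter_add_card_filter_not
    (s := univ.filter q) (p := p)
  simp only [Finset.filter_filter] at this
  simpa [and_comm] using this

private lemma key {n : ℕ} (x y x' y' : Fin n → Bool)
    (h1 : (univ.filter fun v => y v = true).card = (univ.filter fun v => y' v = true).card)
    (h2 : (univ.filter fun v => x v = true ∧ y v = true).card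
        = (univ.filter fun v => x' v = true ∧ y' v = true).card)
    (h3 : (univ.filter fun v => x v = true ∧ y v = false).card
        = (univ.filter fun v => x' v = true ∧ y' v = false).card) :
    ∃ σ : Equiv.Perm (Fin n), x' ∘ σ = x ∧ y' ∘ σ = y := by
  have hfib : ∀ b : Bool × Bool,
      (univ.filter fun a => (x a, y a) = b).card
        = (univ.filter fun a => (x' a, y' a) = b).card := by
    rintro ⟨b1, b2⟩
    simp only [Prod.mk.injEq]
    have e1 := card_split (fun v => x v = true) (fun v => y v = true)
    have e1' := card_split (fun v => x' v = true) (fun v => y' v = true)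
    have e2 := card_split (fun v => x v = true) (fun v => y v = false)
    have e2' := card_split (fun v => x' v = true) (fun v => y' v = false)
    have e3 := card_split (fun v => y v = true) (fun v => (True : Prop))
    have e3' := card_split (fun v => y' v = true) (fun v => (True : Prop))
    simp only [Bool.not_eq_true, and_true, Finset.filter_true] at e1 e1' e2 e2' e3 e3'
    cases b1 <;> cases b2 <;>
      simp only [Bool.not_eq_true, ← Bool.not_eq_true] at * <;>
      simp only [Bool.not_eq_true] at * <;> omega
  obtain ⟨σ, hσ⟩ := exists_perm_comp (fun a => (x a, y a)) (fun a => (x' a, y' a)) hfib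
  refine ⟨σ, funext fun a => ?_, funext fun a => ?_⟩
  · exact congrArg Prod.fst (hσ a)
  · exact congrArg Prod.snd (hσ a)

/-- A matrix indexed by computational basis states of `n` qubits is
permutation-equivariant if it is unchanged by simultaneously reordering the
tensor factors of its rows and columns. -/
def PermEqv {n : ℕ} (L : Matrix (Fin n → Bool) (Fin n → Bool) ℂ) : Prop :=
  ∀ σ : Equiv.Perm (Fin n), ∀ x y : Fin n → Bool, L (x ∘ σ) (y ∘ σ) = L x y

theorem permEqv_iff_exists_weights (n : ℕ)
    (L : Matrix (Fin n → Bool) (Fin n → Bool) ℂ) :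
    PermEqv L ↔
      ∃ w : ℕ × ℕ × ℕ → ℂ, ∀ x y : Fin n → Bool,
        L x y = w ((Finset.univ.filter fun v => y v = true).card,
                   (Finset.univ.filter fun v => x v = true ∧ y v = true).card,
                   (Finset.univ.filter fun v => x v = true ∧ y v = false).card) := by
  classical
  set stats : (Fin n → Bool) → (Fin n → Bool) → ℕ × ℕ × ℕ := fun x y =>
    ((Finset.univ.filter fun v => y v = true).card,
     (Finset.univ.filter fun v => x v = true ∧ y v = true).card,
     (Finset.univ.filter fun v => x v = true ∧ y v = false).card) with hstats
  constructor
  · intro hL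
    refine ⟨fun p => if h : ∃ xy : (Fin n → Bool) × (Fin n → Bool), stats xy.1 xy.2 = p
      then L h.choose.1 h.choose.2 else 0, fun x y => ?_⟩
    show L x y = if h : ∃ xy : (Fin n → Bool) × (Fin n → Bool), stats xy.1 xy.2 = stats x y
      then L h.choose.1 h.choose.2 else 0
    have hex : ∃ xy : (Fin n → Bool) × (Fin n → Bool), stats xy.1 xy.2 = stats x y :=
      ⟨(x, y), rfl⟩
    rw [dif_pos hex]
    have hspec := hex.choose_spec
    set x' := hex.choose.1
    set y' := hex.choose.2
    simp only [hstats, Prod.mk.injEq] at hspec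
    obtain ⟨σ, hx, hy⟩ := key x y x' y' hspec.1.symm hspec.2.1.symm hspec.2.2.symm
    rw [← hx, ← hy, hL]
  · rintro ⟨w, hw⟩ σ x y
    rw [hw (x ∘ σ) (y ∘ σ), hw x y]
    congr 2
    · exact Finset.card_nbij (fun v => σ v) (by intro a ha; simpa using ha) (by
        intro a _ b _ hab; exact σ.injective hab) (by
        intro b hb
        refine ⟨σ.symm b, ?_, by simp⟩
        simp only [Finset.mem_filter, Finset.mem_univ, true_and, Function.comp] at hb ⊢
        simpa using hb)
    congr 1
    · exact Finset.card_nbij (fun v => σ v) (by intro a ha; simpa using ha) (by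
        intro a _ b _ hab; exact σ.injective hab) (by
        intro b hb
        refine ⟨σ.symm b, ?_, by simp⟩
        simp only [Finset.mem_filter, Finset.mem_univ, true_and, Function.comp] at hb ⊢
        simpa using hb)
    · exact Finset.card_nbij (fun v => σ v) (by intro a ha; simpa using ha) (by
        intro a _ b _ hab; exact σ.injective hab) (by
        intro b hb
        refine ⟨σ.symm b, ?_, by simp⟩
        simp only [Finset.mem_filter, Finset.mem_univ, true_and, Function.comp] at hb ⊢
        simpa using hb)
end

section
/- Let n : ℕ and let L, M : Matrix (Fin n → Bool) (Fin n → Bool) ℂ be permutation-equivariant. If the columns of L and M agree at the n+1 sorted basis states, i.e. L x (s_i) = M x (s_i) for all 0 ≤ i ≤ n and all x : Fin n → Bool, then L = M. (A permutation-equivariant matrix is entirely characterized by its action on the sorted basis states s_0, …, s_n.) -/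
/-- The sorted basis state `s_i`, with ones exactly in the last `i` positions. -/
def sortedState (n i : ℕ) : Fin n → Bool := fun v => decide (n - i ≤ (v : ℕ))

def sortedEquiv (n i : ℕ) (h : i ≤ n) : {v : Fin n // sortedState n i v = true} ≃ Fin i where
  toFun v := ⟨(v.1 : ℕ) - (n - i), by
    have hv := v.2
    simp [sortedState] at hv
    have := v.1.2
    omega⟩
  invFun j := ⟨⟨n - i + j, by omega⟩, by simp [sortedState]⟩
  left_inv v := by
    have hv := v.2
    simp [sortedState] at hv
    ext
    simp
    omega
  right_inv j := by
    ext
    simp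

lemma card_sorted (n i : ℕ) (h : i ≤ n) :
    Fintype.card {v : Fin n // sortedState n i v = true} = i := by
  rw [Fintype.card_congr (sortedEquiv n i h), Fintype.card_fin]

lemma exists_perm (n : ℕ) (y : Fin n → Bool) :
    ∃ i ≤ n, ∃ σ : Equiv.Perm (Fin n), ∀ v, y v = sortedState n i (σ v) := by
  classical
  set i := Fintype.card {v : Fin n // y v = true} with hi
  have hin : i ≤ n := by
    rw [hi]
    calc Fintype.card {v : Fin n // y v = true} ≤ Fintype.card (Fin n) :=
      Fintype.card_subtype_le _
    _ = n := Fintype.card_fin n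
  refine ⟨i, hin, ?_⟩
  have hcard : Fintype.card {v : Fin n // y v = true}
      = Fintype.card {v : Fin n // sortedState n i v = true} := by
    rw [card_sorted n i hin]
  have hcard' : Fintype.card {v : Fin n // ¬ (y v = true)}
      = Fintype.card {v : Fin n // ¬ (sortedState n i v = true)} := by
    have h1 := Fintype.card_subtype_compl (fun v : Fin n => y v = true)
    have h2 := Fintype.card_subtype_compl (fun v : Fin n => sortedState n i v = true)
    rw [h1, h2, hcard]
  let e := Fintype.equivOfCardEq hcard
  let f := Fintype.equivOfCardEq hcard'
  refine ⟨(Equiv.sumCompl (fun v => y v = true)).symm.trans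
    ((e.sumCongr f).trans (Equiv.sumCompl (fun v => sortedState n i v = true))), ?_⟩
  intro v
  by_cases hv : y v = true
  · have : (Equiv.sumCompl (fun v => y v = true)).symm v = Sum.inl ⟨v, hv⟩ := by
      exact Equiv.sumCompl_symm_apply_of_pos (p := fun v => y v = true) hv
    simp [this, hv, (e ⟨v, hv⟩).2]
  · have : (Equiv.sumCompl (fun v => y v = true)).symm v = Sum.inr ⟨v, hv⟩ := by
      exact Equiv.sumCompl_symm_apply_of_neg (p := fun v => y v = true) hv
    simp only [Bool.not_eq_true] at hv ⊢
    have hf := (f ⟨v, by simp [hv]⟩).2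
    simp only [Bool.not_eq_true] at hf
    simp [this, hv]
    convert hf using 2

theorem permEqv_determined_by_sorted_states (n : ℕ)
    (L M : Matrix (Fin n → Bool) (Fin n → Bool) ℂ)
    (hL : PermEqv L) (hM : PermEqv M)
    (h : ∀ i ≤ n, ∀ x : Fin n → Bool, L x (sortedState n i) = M x (sortedState n i)) :
    L = M := by
  ext x y
  obtain ⟨i, hin, σ, hσ⟩ := exists_perm n y
  have hy : y = sortedState n i ∘ σ := funext hσ
  have hx : x = (x ∘ σ.symm) ∘ σ := by ext v; simp
  rw [hy, hx, hL σ (x ∘ σ.symm) (sortedState n i), hM σ (x ∘ σ.symm) (sortedState n i)]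
  exact h i hin _
end

section
/- Let n : ℕ. The set of permutation-equivariant matrices L : Matrix (Fin n → Bool) (Fin n → Bool) ℂ is a ℂ-submodule of the space of all such matrices, and its dimension (finrank over ℂ) equals ∑_{i=0}^{n} (i+1)(n−i+1), the number of triples (i,j,k) of natural numbers with 0 ≤ i ≤ n, 0 ≤ j ≤ i and 0 ≤ k ≤ n−i. -/
section aux

/-- If two tuples give permuted lists, they differ by a permutation of indices. -/
lemma exists_comp_eq_of_perm {β : Type*} [LinearOrder β] {n : ℕ} {f g : Fin n → β}
    (h : (List.ofFn f).Perm (List.ofFn g)) : ∃ σ : Equiv.Perm (Fin n), f ∘ σ = g := by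
  have h1 : f ∘ Tuple.sort f = g ∘ Tuple.sort g := by
    apply List.ofFn_injective
    refine List.Perm.eq_of_sortedLE (Tuple.monotone_sort f).sortedLE_ofFn
      (Tuple.monotone_sort g).sortedLE_ofFn ?_
    exact ((Tuple.sort f).ofFn_comp_perm f).trans (h.trans ((Tuple.sort g).ofFn_comp_perm g).symm)
  refine ⟨(Tuple.sort g).symm.trans (Tuple.sort f), funext fun i => ?_⟩
  have := congrFun h1 ((Tuple.sort g).symm i)
  simpa using this

variable (n : ℕ)

/-- The setoid of tuples up to permutation. -/
def fnSetoid (β : Type*) : Setoid (Fin n → β) where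
  r f g := ∃ σ : Equiv.Perm (Fin n), f ∘ σ = g
  iseqv := by
    refine ⟨fun f => ⟨1, ?_⟩, ?_, ?_⟩
    · funext i; rfl
    · rintro f g ⟨σ, rfl⟩
      exact ⟨σ.symm, funext fun i => by simp⟩
    · rintro f g h ⟨σ, rfl⟩ ⟨τ, rfl⟩
      exact ⟨τ.trans σ, rfl⟩

/-- The setoid of pairs of boolean tuples up to simultaneous permutation. -/
def pairSetoid : Setoid ((Fin n → Bool) × (Fin n → Bool)) where
  r p q := ∃ σ : Equiv.Perm (Fin n), (p.1 ∘ σ, p.2 ∘ σ) = q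
  iseqv := by
    refine ⟨fun p => ⟨1, ?_⟩, ?_, ?_⟩
    · rfl
    · rintro ⟨x, y⟩ q ⟨σ, rfl⟩
      exact ⟨σ.symm, by simp [Function.comp_def]⟩
    · rintro ⟨x, y⟩ q r ⟨σ, rfl⟩ ⟨τ, rfl⟩
      exact ⟨τ.trans σ, rfl⟩

noncomputable def e4 : (Bool × Bool) ≃ Fin 4 :=
  Fintype.equivFinOfCardEq (by simp)

/-- Pairs of tuples as tuples of pairs (encoded in `Fin 4`). -/
noncomputable def encEquiv : ((Fin n → Bool) × (Fin n → Bool)) ≃ (Fin n → Fin 4) where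
  toFun p := fun i => e4 (p.1 i, p.2 i)
  invFun f := (fun i => (e4.symm (f i)).1, fun i => (e4.symm (f i)).2)
  left_inv p := by simp
  right_inv f := by simp

lemma encEquiv_rel (p q : (Fin n → Bool) × (Fin n → Bool)) :
    (pairSetoid n).r p q ↔ (fnSetoid n (Fin 4)).r (encEquiv n p) (encEquiv n q) := by
  constructor
  · rintro ⟨σ, rfl⟩
    exact ⟨σ, rfl⟩
  · rintro ⟨σ, h⟩
    refine ⟨σ, ?_⟩
    have h1 : ∀ i, e4 (p.1 (σ i), p.2 (σ i)) = e4 (q.1 i, q.2 i) := fun i => congrFun h i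
    have h2 : ∀ i, (p.1 (σ i), p.2 (σ i)) = (q.1 i, q.2 i) := fun i => e4.injective (h1 i)
    exact Prod.ext (funext fun i => congrArg Prod.fst (h2 i))
      (funext fun i => congrArg Prod.snd (h2 i))

/-- Quotient of tuples by permutation is `Sym`. -/
noncomputable def quotEquivSym : Quotient (fnSetoid n (Fin 4)) ≃ Sym (Fin 4) n := by
  refine Equiv.ofBijective
    (Quotient.lift (fun f => (⟨(List.ofFn f : List (Fin 4)), by simp⟩ : Sym (Fin 4) n)) ?_) ⟨?_, ?_⟩
  · rintro f g ⟨σ, rfl⟩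
    exact Subtype.ext (Multiset.coe_eq_coe.mpr (σ.ofFn_comp_perm f).symm)
  · rintro ⟨f⟩ ⟨g⟩ h
    have hp : (List.ofFn f).Perm (List.ofFn g) :=
      Multiset.coe_eq_coe.mp (congrArg Subtype.val h)
    obtain ⟨σ, hσ⟩ := exists_comp_eq_of_perm hp
    exact Quotient.sound ⟨σ, hσ⟩
  · rintro ⟨m, hm⟩
    obtain ⟨l, rfl⟩ : ∃ l : List (Fin 4), (l : Multiset (Fin 4)) = m := Quotient.exists_rep m
    have hl : l.length = n := by simpa using hm
    refine ⟨Quotient.mk _ (fun i : Fin n => l.get (Fin.cast hl.symm i)), ?_⟩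
    refine Subtype.ext ?_
    show ((List.ofFn fun i : Fin n => l.get (Fin.cast hl.symm i)) : Multiset (Fin 4))
      = (l : Multiset (Fin 4))
    congr 1
    have := List.ofFn_congr hl l.get
    rw [List.ofFn_get] at this
    exact this.symm

noncomputable def bigEquiv : Quotient (pairSetoid n) ≃ Sym (Fin 4) n :=
  (Quotient.congr (encEquiv n) (encEquiv_rel n)).trans (quotEquivSym n)

noncomputable instance : Fintype (Quotient (pairSetoid n)) :=
  Fintype.ofEquiv _ (bigEquiv n).symm

lemma gauss_sum : ∑ i ∈ Finset.range (n + 2), (i + 1) = (n + 3).choose 2 := by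
  induction n with
  | zero => decide
  | succ m ihm =>
    rw [Finset.sum_range_succ, ihm]
    have : (m + 1 + 3).choose 2 = (m + 3).choose 1 + (m + 3).choose 2 := by
      rw [show m + 1 + 3 = (m + 3) + 1 from rfl, Nat.choose_succ_succ]
    rw [this, Nat.choose_one_right]
    omega

lemma sum_eq_choose :
    ∑ i ∈ Finset.range (n + 1), (i + 1) * (n - i + 1) = (n + 3).choose 3 := by
  induction n with
  | zero => decide
  | succ n ih =>
    have key : ∑ i ∈ Finset.range (n + 2), (i + 1) * (n + 1 - i + 1)
        = (∑ i ∈ Finset.range (n + 1), (i + 1) * (n - i + 1))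
          + ∑ i ∈ Finset.range (n + 2), (i + 1) := by
      rw [Finset.sum_range_succ (fun i => (i + 1) * (n + 1 - i + 1)),
        Finset.sum_range_succ (fun i => i + 1), ← add_assoc]
      congr 1
      · rw [← Finset.sum_add_distrib]
        apply Finset.sum_congr rfl
        intro i hi
        have : i ≤ n := by simpa [Nat.lt_succ_iff] using hi
        have h2 : n + 1 - i + 1 = (n - i + 1) + 1 := by omega
        rw [h2, Nat.mul_add, Nat.mul_one]
      · simp
    rw [key, ih, gauss_sum]
    have : (n + 1 + 3).choose 3 = (n + 3).choose 2 + (n + 3).choose 3 := by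
      rw [show n + 1 + 3 = (n + 3) + 1 from rfl, Nat.choose_succ_succ]
    rw [this]
    omega

end aux

/-- The `ℂ`-submodule of permutation-equivariant matrices on `n` qubits. -/
noncomputable def permEqvSubmodule (n : ℕ) :
    Submodule ℂ (Matrix (Fin n → Bool) (Fin n → Bool) ℂ) where
  carrier := {L | ∀ σ : Equiv.Perm (Fin n), ∀ x y : Fin n → Bool,
    L (x ∘ σ) (y ∘ σ) = L x y}
  add_mem' := by
    intro L M hL hM σ x y
    simp only [Matrix.add_apply, hL σ x y, hM σ x y]
  zero_mem' := by
    intro σ x y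
    rfl
  smul_mem' := by
    intro c L hL σ x y
    simp only [Matrix.smul_apply, hL σ x y]

/-- Permutation-equivariant matrices are functions on the orbit quotient. -/
noncomputable def permEqvLinearEquiv (n : ℕ) :
    (permEqvSubmodule n) ≃ₗ[ℂ] (Quotient (pairSetoid n) → ℂ) where
  toFun L := Quotient.lift (fun p => (L : Matrix (Fin n → Bool) (Fin n → Bool) ℂ) p.1 p.2) (by
    rintro ⟨x, y⟩ q ⟨σ, rfl⟩
    exact (L.2 σ x y).symm)
  map_add' L M := by
    funext q
    induction q using Quotient.ind
    rfl
  map_smul' c L := by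
    funext q
    induction q using Quotient.ind
    rfl
  invFun f := ⟨Matrix.of (fun x y => f (Quotient.mk _ (x, y))), by
    intro σ x y
    exact congrArg f (Quotient.sound ⟨σ.symm, by simp [Function.comp_def]⟩)⟩
  left_inv L := by
    apply Subtype.ext
    ext x y
    rfl
  right_inv f := by
    funext q
    induction q using Quotient.ind
    rfl

theorem finrank_permEqvSubmodule (n : ℕ) :
    Module.finrank ℂ (permEqvSubmodule n) =
      ∑ i ∈ Finset.range (n + 1), (i + 1) * (n - i + 1) := by
  rw [(permEqvLinearEquiv n).finrank_eq, Module.finrank_fintype_fun_eq_card,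
    Fintype.card_congr (bigEquiv n), Sym.card_sym_eq_choose, Fintype.card_fin, sum_eq_choose]
  have h1 : 4 + n - 1 = n + 3 := by omega
  have h2 := Nat.choose_symm (show 3 ≤ n + 3 by omega)
  rw [show n + 3 - 3 = n from by omega] at h2
  rw [h1, h2]
end

section
/- Let n : ℕ and let d : (Fin n → Bool) → ℂ. The diagonal matrix Matrix.diagonal d : Matrix (Fin n → Bool) (Fin n → Bool) ℂ is permutation-equivariant if and only if d depends only on Hamming weight, i.e. d x = d y whenever card {v | x v = true} = card {v | y v = true}. Consequently, the ℂ-submodule of permutation-equivariant diagonal matrices on (Fin n → Bool) has dimension (finrank over ℂ) equal to n + 1. -/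
/-- The `ℂ`-submodule of permutation-equivariant diagonal matrices on `n` qubits. -/
noncomputable def diagPermEqvSubmodule (n : ℕ) :
    Submodule ℂ (Matrix (Fin n → Bool) (Fin n → Bool) ℂ) where
  carrier := {L | L.IsDiag ∧ PermEqv L}
  add_mem' := by
    intro L M hL hM
    exact ⟨hL.1.add hM.1, fun σ x y => by
      simp only [Matrix.add_apply, hL.2 σ x y, hM.2 σ x y]⟩
  zero_mem' := ⟨Matrix.isDiag_zero, fun σ x y => rfl⟩
  smul_mem' := by
    intro c L hL
    exact ⟨hL.1.smul c, fun σ x y => by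
      simp only [Matrix.smul_apply, hL.2 σ x y]⟩

namespace QAux
variable {n : ℕ}

def wt (x : Fin n → Bool) : ℕ := (Finset.univ.filter fun v => x v = true).card

lemma wt_le (x : Fin n → Bool) : wt x ≤ n := by
  simpa [wt] using Finset.card_filter_le Finset.univ (fun v => x v = true)

def W (x : Fin n → Bool) : Fin (n+1) := ⟨wt x, Nat.lt_succ_of_le (wt_le x)⟩

lemma card_subtype_eq (x : Fin n → Bool) :
    Fintype.card {v // x v = true} = wt x := by
  simp [wt, Fintype.card_subtype]

lemma exists_perm (x y : Fin n → Bool) (h : wt x = wt y) :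
    ∃ σ : Equiv.Perm (Fin n), x ∘ σ = y := by
  classical
  have h1 : Fintype.card {v // y v = true} = Fintype.card {v // x v = true} := by
    rw [card_subtype_eq, card_subtype_eq, h]
  have h2 : Fintype.card {v // ¬ y v = true} = Fintype.card {v // ¬ x v = true} := by
    rw [Fintype.card_subtype_compl, Fintype.card_subtype_compl, h1]
  let e := Fintype.equivOfCardEq h1
  let e' := Fintype.equivOfCardEq h2
  refine ⟨(Equiv.sumCompl fun v => y v = true).symm.trans
    ((Equiv.sumCongr e e').trans (Equiv.sumCompl fun v => x v = true)), ?_⟩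
  funext v
  by_cases hv : y v = true
  · rw [Function.comp_apply]
    have : (Equiv.sumCompl fun v => y v = true).symm v = Sum.inl ⟨v, hv⟩ :=
      Equiv.sumCompl_symm_apply_of_pos (p := fun v => y v = true) hv
    simp only [Equiv.trans_apply, this, Equiv.sumCongr_apply, Sum.map_inl,
      Equiv.sumCompl_apply_inl]
    rw [hv]
    exact (e ⟨v, hv⟩).2
  · rw [Function.comp_apply]
    have : (Equiv.sumCompl fun v => y v = true).symm v = Sum.inr ⟨v, hv⟩ :=
      Equiv.sumCompl_symm_apply_of_neg (p := fun v => y v = true) hv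
    simp only [Equiv.trans_apply, this, Equiv.sumCongr_apply, Sum.map_inr,
      Equiv.sumCompl_apply_inr]
    have hx := (e' ⟨v, hv⟩).2
    simp only [Bool.not_eq_true] at hx hv
    rw [hv, hx]

lemma wt_comp (x : Fin n → Bool) (σ : Equiv.Perm (Fin n)) : wt (x ∘ σ) = wt x := by
  unfold wt
  apply Finset.card_bij (fun v _ => σ v)
  · intro a ha; simp only [Finset.mem_filter, Finset.mem_univ, true_and,
      Function.comp_apply] at *; exact ha
  · intro a _ b _ hab; exact σ.injective hab
  · intro b hb
    refine ⟨σ.symm b, ?_, by simp⟩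
    simp only [Finset.mem_filter, Finset.mem_univ, true_and, Function.comp_apply,
      Equiv.apply_symm_apply] at *
    exact hb

def rep (k : Fin (n+1)) : Fin n → Bool := fun v => decide (v.val < k.val)

lemma wt_rep (k : Fin (n+1)) : wt (rep k) = k.val := by
  have e : Fin k.val ≃ {v : Fin n // (v : ℕ) < k.val} :=
    { toFun := fun i => ⟨⟨i, lt_of_lt_of_le i.2 (Nat.lt_succ_iff.mp k.2)⟩, i.2⟩
      invFun := fun v => ⟨v.1.1, v.2⟩
      left_inv := fun i => rfl
      right_inv := fun v => rfl }
  have : wt (rep k) = Fintype.card {v : Fin n // rep k v = true} :=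
    (card_subtype_eq _).symm
  rw [this]
  simp only [rep, decide_eq_true_eq]
  rw [← Fintype.card_congr e, Fintype.card_fin]

variable {n : ℕ}

/-- The linear map sending a weight profile to the corresponding diagonal matrix. -/
def Phi (n : ℕ) : (Fin (n+1) → ℂ) →ₗ[ℂ] Matrix (Fin n → Bool) (Fin n → Bool) ℂ where
  toFun c := Matrix.diagonal fun x => c (W x)
  map_add' a b := by
    ext i j
    by_cases h : i = j <;> simp [Matrix.diagonal_apply, h]
  map_smul' r a := by
    ext i j
    by_cases h : i = j <;> simp [Matrix.diagonal_apply, h]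

lemma W_comp (x : Fin n → Bool) (σ : Equiv.Perm (Fin n)) : W (x ∘ σ) = W x :=
  Fin.ext (wt_comp x σ)

lemma range_Phi : LinearMap.range (Phi n) = diagPermEqvSubmodule n := by
  ext L
  constructor
  · rintro ⟨c, rfl⟩
    refine ⟨Matrix.isDiag_diagonal _, fun σ x y => ?_⟩
    by_cases hxy : x = y
    · subst hxy
      simp only [Phi, LinearMap.coe_mk, AddHom.coe_mk, Matrix.diagonal_apply_eq, W_comp]
    · have hσ : x ∘ σ ≠ y ∘ σ := fun h => hxy (by
        funext v
        have := congrFun h (σ.symm v)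
        simpa using this)
      simp only [Phi, LinearMap.coe_mk, AddHom.coe_mk,
        Matrix.diagonal_apply_ne _ hσ, Matrix.diagonal_apply_ne _ hxy]
  · rintro ⟨hdiag, heqv⟩
    refine ⟨fun k => L (rep k) (rep k), ?_⟩
    ext x y
    by_cases hxy : x = y
    · subst hxy
      simp only [Phi, LinearMap.coe_mk, AddHom.coe_mk, Matrix.diagonal_apply_eq]
      have hwt : wt x = wt (rep (W x)) := (wt_rep (W x)).symm
      obtain ⟨σ, hσ⟩ := exists_perm x (rep (W x)) hwt
      rw [← hσ, heqv σ x x]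
    · simp only [Phi, LinearMap.coe_mk, AddHom.coe_mk,
        Matrix.diagonal_apply_ne _ hxy]
      exact (hdiag hxy).symm

lemma Phi_inj : Function.Injective (Phi n) := by
  intro a b hab
  funext k
  have h := congrFun (congrFun (congrArg (fun M => (M : Matrix _ _ ℂ)) hab) (rep k)) (rep k)
  simp only [Phi, LinearMap.coe_mk, AddHom.coe_mk, Matrix.diagonal_apply_eq] at h
  have hW : W (rep k) = k := Fin.ext (wt_rep k)
  rwa [hW] at h

end QAux

open QAux in
theorem diagonal_permEqv_iff_and_finrank (n : ℕ) (d : (Fin n → Bool) → ℂ) :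
    (PermEqv (Matrix.diagonal d) ↔
      ∀ x y : Fin n → Bool,
        (Finset.univ.filter fun v => x v = true).card =
          (Finset.univ.filter fun v => y v = true).card → d x = d y) ∧
    Module.finrank ℂ (diagPermEqvSubmodule n) = n + 1 := by
  constructor
  · constructor
    · intro h x y hcard
      obtain ⟨σ, hσ⟩ := exists_perm x y hcard
      have := h σ x x
      rw [hσ] at this
      simpa using this.symm
    · intro h σ x y
      by_cases hxy : x = y
      · subst hxy
        rw [Matrix.diagonal_apply_eq, Matrix.diagonal_apply_eq]
        exact h _ _ (wt_comp x σ)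
      · have hσ : x ∘ σ ≠ y ∘ σ := fun hc => hxy (by
          funext v
          have := congrFun hc (σ.symm v)
          simpa using this)
        rw [Matrix.diagonal_apply_ne _ hσ, Matrix.diagonal_apply_ne _ hxy]
  · rw [← range_Phi, LinearMap.finrank_range_of_inj Phi_inj]
    simp
end

section
/- Let n s : ℕ with s ≥ 1 and let d : (Fin n → Fin s) → ℂ. The diagonal matrix Matrix.diagonal d : Matrix (Fin n → Fin s) (Fin n → Fin s) ℂ is permutation-equivariant (i.e. d (x ∘ σ) = d x for all σ : Equiv.Perm (Fin n) and all x) if and only if d x depends only on the count function j ↦ card {v | x v = j}, i.e. d x = d y whenever card {v | x v = j} = card {v | y v = j} for all j : Fin s. Consequently, the ℂ-submodule of permutation-equivariant diagonal matrices on (Fin n → Fin s) has dimension (finrank over ℂ) equal to (n + s − 1).choose (s − 1), the number of s-tuples of natural numbers summing to n. -/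
private def msOf {n s : ℕ} (x : Fin n → Fin s) : Sym (Fin s) n :=
  ⟨Multiset.map x Finset.univ.val, by
    rw [Multiset.card_map]; exact Finset.card_fin n⟩

private lemma count_msOf {n s : ℕ} (x : Fin n → Fin s) (j : Fin s) :
    Multiset.count j (msOf x).1 = (Finset.univ.filter fun v => x v = j).card := by
  show Multiset.count j (Multiset.map x Finset.univ.val) = _
  rw [Multiset.count_map]
  rw [Multiset.filter_congr (fun a _ => eq_comm (a := j) (b := x a))]
  rfl

private lemma msOf_eq_iff {n s : ℕ} (x y : Fin n → Fin s) :
    msOf x = msOf y ↔ ∀ j : Fin s, (Finset.univ.filter fun v => x v = j).card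
      = (Finset.univ.filter fun v => y v = j).card := by
  constructor
  · intro h j
    rw [← count_msOf, ← count_msOf, h]
  · intro h
    apply Subtype.ext
    apply Multiset.ext.2
    intro j
    rw [count_msOf, count_msOf]
    exact h j

private lemma msOf_comp {n s : ℕ} (x : Fin n → Fin s) (σ : Equiv.Perm (Fin n)) :
    msOf (x ∘ σ) = msOf x := by
  apply Subtype.ext
  show Multiset.map (x ∘ σ) Finset.univ.val = Multiset.map x Finset.univ.val
  rw [← Multiset.map_map]
  congr 1
  have := congrArg Finset.val (Finset.map_univ_equiv σ)
  simpa [Finset.map_val] using this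

private lemma exists_perm_of_msOf_eq {n s : ℕ} {x y : Fin n → Fin s} (h : msOf x = msOf y) :
    ∃ σ : Equiv.Perm (Fin n), x ∘ σ = y := by
  have hcard : ∀ j : Fin s, Fintype.card {v // y v = j} = Fintype.card {v // x v = j} := by
    intro j
    rw [Fintype.card_subtype, Fintype.card_subtype, (msOf_eq_iff x y).1 h j]
  refine ⟨Equiv.ofFiberEquiv (f := y) (g := x)
    (fun j => Fintype.equivOfCardEq (hcard j)), ?_⟩
  funext v
  exact Equiv.ofFiberEquiv_map _ v

private lemma msOf_surjective {n s : ℕ} : Function.Surjective (msOf (n := n) (s := s)) := by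
  intro m
  obtain ⟨l, hl⟩ : ∃ l : List (Fin s), m.1 = ↑l := (Quotient.exists_rep m.1).imp fun l h => h.symm
  have hlen : l.length = n := by
    have := m.2
    rw [hl] at this
    simpa using this
  refine ⟨fun i => l.get (Fin.cast hlen.symm i), Subtype.ext ?_⟩
  show Multiset.map (fun i => l.get (Fin.cast hlen.symm i)) Finset.univ.val = m.1
  rw [hl]
  have huniv : (Finset.univ : Finset (Fin n)).val = ↑(List.finRange n) := rfl
  rw [huniv]
  rw [Multiset.map_coe]
  congr 1
  apply List.ext_getElem
  · simp [hlen]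
  · intro i h1 h2
    simp [List.getElem_finRange]

private lemma comp_perm_injective {n s : ℕ} (σ : Equiv.Perm (Fin n)) {x y : Fin n → Fin s}
    (h : x ∘ σ = y ∘ σ) : x = y := by
  funext v
  have := congrFun h (σ.symm v)
  simpa using this

/-- The `ℂ`-submodule of permutation-equivariant diagonal matrices on `n` nodes with
`s` possible states each. -/
noncomputable def diagPermEqvSubmoduleS (n s : ℕ) :
    Submodule ℂ (Matrix (Fin n → Fin s) (Fin n → Fin s) ℂ) where
  carrier := {L | L.IsDiag ∧ ∀ σ : Equiv.Perm (Fin n), ∀ x y : Fin n → Fin s,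
    L (x ∘ σ) (y ∘ σ) = L x y}
  add_mem' := by
    intro L M hL hM
    exact ⟨hL.1.add hM.1, fun σ x y => by
      simp only [Matrix.add_apply, hL.2 σ x y, hM.2 σ x y]⟩
  zero_mem' := ⟨Matrix.isDiag_zero, fun σ x y => rfl⟩
  smul_mem' := by
    intro c L hL
    exact ⟨hL.1.smul c, fun σ x y => by
      simp only [Matrix.smul_apply, hL.2 σ x y]⟩

private noncomputable def symToSub (n s : ℕ) :
    (Sym (Fin s) n → ℂ) →ₗ[ℂ] diagPermEqvSubmoduleS n s where
  toFun f := ⟨Matrix.diagonal (fun x => f (msOf x)), Matrix.isDiag_diagonal _, by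
    intro σ x y
    by_cases h : x = y
    · subst h
      rw [Matrix.diagonal_apply_eq, Matrix.diagonal_apply_eq, msOf_comp]
    · rw [Matrix.diagonal_apply_ne _ h,
        Matrix.diagonal_apply_ne _ (fun hc => h (comp_perm_injective σ hc))]⟩
  map_add' f g := by
    apply Subtype.ext
    show Matrix.diagonal _ = Matrix.diagonal _ + Matrix.diagonal _
    rw [Matrix.diagonal_add]
    rfl
  map_smul' c f := by
    apply Subtype.ext
    show Matrix.diagonal (c • fun x => f (msOf x)) = c • Matrix.diagonal fun x => f (msOf x)
    rw [Matrix.diagonal_smul]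

private lemma symToSub_bijective (n s : ℕ) : Function.Bijective (symToSub n s) := by
  constructor
  · intro f g h
    funext m
    obtain ⟨x, rfl⟩ := msOf_surjective m
    have := congrArg (fun L => (L : Matrix _ _ ℂ) x x) (congrArg Subtype.val h)
    simpa [symToSub, Matrix.diagonal_apply_eq] using this
  · rintro ⟨L, hdiag, hequiv⟩
    refine ⟨fun m => L (msOf_surjective m).choose (msOf_surjective m).choose, ?_⟩
    apply Subtype.ext
    show Matrix.diagonal _ = L
    ext i j
    by_cases h : i = j
    · subst h
      rw [Matrix.diagonal_apply_eq]
      have hspec := (msOf_surjective (msOf i)).choose_spec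
      obtain ⟨σ, hσ⟩ := exists_perm_of_msOf_eq hspec
      calc L (msOf_surjective (msOf i)).choose (msOf_surjective (msOf i)).choose
          = L ((msOf_surjective (msOf i)).choose ∘ σ) ((msOf_surjective (msOf i)).choose ∘ σ) :=
            (hequiv σ _ _).symm
        _ = L i i := by rw [hσ]
    · rw [Matrix.diagonal_apply_ne _ h]
      exact (hdiag h).symm

theorem diagonal_permEqv_iff_and_finrank_general (n s : ℕ) (hs : 1 ≤ s)
    (d : (Fin n → Fin s) → ℂ) :
    ((∀ σ : Equiv.Perm (Fin n), ∀ x : Fin n → Fin s, d (x ∘ σ) = d x) ↔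
      ∀ x y : Fin n → Fin s,
        (∀ j : Fin s, (Finset.univ.filter fun v => x v = j).card =
          (Finset.univ.filter fun v => y v = j).card) → d x = d y) ∧
    Module.finrank ℂ (diagPermEqvSubmoduleS n s) = (n + s - 1).choose (s - 1) := by
  constructor
  · constructor
    · intro hperm x y hc
      obtain ⟨σ, hσ⟩ := exists_perm_of_msOf_eq ((msOf_eq_iff x y).2 hc)
      rw [← hσ]
      exact (hperm σ x).symm
    · intro h σ x
      exact h _ _ fun j => (msOf_eq_iff _ _).1 (msOf_comp x σ) j
  · have e : (Sym (Fin s) n → ℂ) ≃ₗ[ℂ] diagPermEqvSubmoduleS n s :=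
      LinearEquiv.ofBijective _ (symToSub_bijective n s)
    rw [← e.finrank_eq, Module.finrank_fintype_fun_eq_card, Sym.card_sym_eq_choose]
    have h1 : Fintype.card (Fin s) + n - 1 = n + s - 1 := by simp; omega
    have h2 : n + s - 1 - (s - 1) = n := by omega
    rw [h1]
    have h3 := Nat.choose_symm (n := n + s - 1) (k := s - 1) (by omega)
    rw [h2] at h3
    exact h3
end

section
/- Let n : ℕ be odd with n ≥ 3 and let b : ZMod n → ZMod 2. Then the cycle exponential sum satisfies S(b)^2 = 0 or S(b)^2 = 2^(n+1). Equivalently, when the EDU-QGC that applies a CZ(π) gate along each edge of the n-cycle followed by a Hadamard on every node is applied to the state |+⟩^{⊗n}, each measured bitstring b occurs with probability 4^{-n} S(b)^2 ∈ {0, 2^{-(n-1)}}. -/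
/-- The cycle exponential sum: `S(b) = ∑_x (-1)^(∑ᵢ xᵢ x_{i+1} + ∑ᵢ bᵢ xᵢ)`, whose
normalized square `4⁻ⁿ S(b)²` is the probability of measuring bitstring `b` when `CZ(π)`
gates are applied along each edge of the `n`-cycle to `|+⟩^{⊗n}`, followed by Hadamards. -/
def cycleSum : (n : ℕ) → (ZMod n → ZMod 2) → ℤ
  | 0, _ => 0
  | m + 1, b =>
    ∑ x : ZMod (m + 1) → ZMod 2,
      (-1 : ℤ) ^ ((∑ i : ZMod (m + 1), (x i).val * (x (i + 1)).val) +
        ∑ i : ZMod (m + 1), (b i).val * (x i).val)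

namespace CycleAux

/-- The sign character on `ZMod 2`. -/
def e2 (a : ZMod 2) : ℤ := (-1) ^ a.val

lemma e2_add : ∀ a b : ZMod 2, e2 (a + b) = e2 a * e2 b := by decide
lemma e2_zero : e2 0 = 1 := rfl
lemma e2_one : e2 1 = -1 := rfl

lemma e2_natCast (k : ℕ) : e2 ((k : ZMod 2)) = (-1 : ℤ) ^ k := by
  rw [e2, ZMod.val_natCast, ← neg_one_pow_eq_pow_mod_two]

lemma zmod2_cases : ∀ a : ZMod 2, a = 0 ∨ a = 1 := by decide
lemma ne_zero_eq_one' : ∀ a : ZMod 2, a ≠ 0 → a = 1 := by decide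
lemma add_eq_zero_iff' : ∀ a b : ZMod 2, a + b = 0 → a = b := by decide

lemma val_cast (a : ZMod 2) : ((a.val : ZMod 2)) = a := by
  rw [ZMod.natCast_val, ZMod.cast_id]

/-- Orthogonality: the character sum over the group vanishes unless trivial. -/
lemma sum_linear (n : ℕ) [NeZero n] (c : ZMod n → ZMod 2) :
    (∑ x : ZMod n → ZMod 2, e2 (∑ i, c i * x i)) = if c = 0 then (2 : ℤ) ^ n else 0 := by
  by_cases hc : c = 0
  · simp [hc, e2_zero, Finset.card_univ, ZMod.card]
  · rw [if_neg hc]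
    obtain ⟨j, hj⟩ : ∃ j, c j ≠ 0 := by
      by_contra h; push_neg at h; exact hc (funext fun i => h i)
    have hj1 : c j = 1 := ne_zero_eq_one' _ hj
    set δ : ZMod n → ZMod 2 := Pi.single j 1 with hδ
    have key : ∀ x : ZMod n → ZMod 2,
        (∑ i, c i * (x i + δ i)) = (∑ i, c i * x i) + 1 := by
      intro x
      have hδs : (∑ i, c i * δ i) = 1 := by
        rw [Finset.sum_eq_single j]
        · simp [hδ, hj1]
        · intro i _ hij; simp [hδ, Pi.single_eq_of_ne hij]
        · simp
      calc (∑ i, c i * (x i + δ i)) = (∑ i, c i * x i) + ∑ i, c i * δ i := by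
            rw [← Finset.sum_add_distrib]; congr 1; ext i; ring
        _ = (∑ i, c i * x i) + 1 := by rw [hδs]
    set S : ℤ := ∑ x : ZMod n → ZMod 2, e2 (∑ i, c i * x i) with hS
    have hre : S = ∑ x : ZMod n → ZMod 2, e2 (∑ i, c i * (x i + δ i)) := by
      rw [hS]
      exact (Fintype.sum_equiv (Equiv.addRight δ)
        (fun x => e2 (∑ i, c i * (x i + δ i)))
        (fun x => e2 (∑ i, c i * x i)) (fun x => rfl)).symm
    have hSS : S = -S := by
      have hneg : ∀ x : ZMod n → ZMod 2,
          e2 (∑ i, c i * (x i + δ i)) = -e2 (∑ i, c i * x i) := by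
        intro x; rw [key x, e2_add, e2_one]; ring
      calc S = ∑ x : ZMod n → ZMod 2, e2 (∑ i, c i * (x i + δ i)) := hre
        _ = ∑ x : ZMod n → ZMod 2, -e2 (∑ i, c i * x i) :=
            Finset.sum_congr rfl fun x _ => hneg x
        _ = -S := by rw [← Finset.sum_neg_distrib]
    linarith

/-- On an odd cycle, a sequence with `z (i+1) = z (i-1)` is constant. -/
lemma const_of (n : ℕ) [NeZero n] (hodd : Odd n) (z : ZMod n → ZMod 2)
    (h : ∀ i : ZMod n, z (i + 1) + z (i - 1) = 0) : ∀ i, z i = z 0 := by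
  have h2 : ∀ j : ZMod n, z (j + 2) = z j := by
    intro j
    have := add_eq_zero_iff' _ _ (h (j + 1))
    have e1 : j + 1 + 1 = j + 2 := by ring
    have e2 : j + 1 - 1 = j := by ring
    rw [e1, e2] at this
    exact this
  have hm : ∀ m : ℕ, z ((2 * m : ℕ) : ZMod n) = z 0 := by
    intro m
    induction m with
    | zero => simp
    | succ k ih =>
      have : ((2 * (k + 1) : ℕ) : ZMod n) = ((2 * k : ℕ) : ZMod n) + 2 := by
        push_cast; ring
      rw [this, h2]; exact ih
  intro i
  have hu : IsUnit (2 : ZMod n) := by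
    have : ((2 : ℕ) : ZMod n) = (2 : ZMod n) := by norm_cast
    rw [← this, ZMod.isUnit_iff_coprime]
    exact Nat.coprime_two_left.mpr hodd
  have hmi : ((2 * ((2 : ZMod n)⁻¹ * i).val : ℕ) : ZMod n) = i := by
    push_cast
    rw [ZMod.natCast_val, ZMod.cast_id, ← mul_assoc, ZMod.mul_inv_of_unit _ hu, one_mul]
  rw [← hmi]; exact hm _

lemma reindex_sub (n : ℕ) [NeZero n] (z x : ZMod n → ZMod 2) :
    (∑ i : ZMod n, z i * x (i + 1)) = ∑ i : ZMod n, z (i - 1) * x i := by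
  refine Fintype.sum_equiv (Equiv.addRight (1 : ZMod n))
    (fun i => z i * x (i + 1)) (fun i => z (i - 1) * x i) fun i => ?_
  simp

lemma exponent_id (n : ℕ) [NeZero n] (b z x : ZMod n → ZMod 2) :
    ((∑ i : ZMod n, x i * x (i + 1)) + ∑ i : ZMod n, b i * x i) +
      ((∑ i : ZMod n, (x i + z i) * (x (i + 1) + z (i + 1))) +
        ∑ i : ZMod n, b i * (x i + z i)) =
    ((∑ i : ZMod n, z i * z (i + 1)) + ∑ i : ZMod n, b i * z i) +
      ∑ i : ZMod n, (z (i + 1) + z (i - 1)) * x i := by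
  have e1 : (∑ i : ZMod n, (x i + z i) * (x (i + 1) + z (i + 1)))
      = (∑ i : ZMod n, x i * x (i + 1)) + ((∑ i : ZMod n, z (i + 1) * x i) +
        ((∑ i : ZMod n, z i * x (i + 1)) + ∑ i : ZMod n, z i * z (i + 1))) := by
    rw [← Finset.sum_add_distrib, ← Finset.sum_add_distrib, ← Finset.sum_add_distrib]
    exact Finset.sum_congr rfl fun i _ => by ring
  have e2 : (∑ i : ZMod n, b i * (x i + z i))
      = (∑ i : ZMod n, b i * x i) + ∑ i : ZMod n, b i * z i := by
    rw [← Finset.sum_add_distrib]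
    exact Finset.sum_congr rfl fun i _ => by ring
  have e3 : (∑ i : ZMod n, (z (i + 1) + z (i - 1)) * x i)
      = (∑ i : ZMod n, z (i + 1) * x i) + ∑ i : ZMod n, z (i - 1) * x i := by
    rw [← Finset.sum_add_distrib]
    exact Finset.sum_congr rfl fun i _ => by ring
  rw [e1, e2, e3, reindex_sub n z x]
  generalize (∑ i : ZMod n, x i * x (i + 1)) = A
  generalize (∑ i : ZMod n, b i * x i) = B
  generalize (∑ i : ZMod n, z (i + 1) * x i) = C
  generalize (∑ i : ZMod n, z (i - 1) * x i) = D
  generalize (∑ i : ZMod n, z i * z (i + 1)) = E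
  generalize (∑ i : ZMod n, b i * z i) = F
  revert A B C D E F; decide

end CycleAux

open CycleAux in
theorem cycleSum_sq_odd (n : ℕ) (hn : 3 ≤ n) (hodd : Odd n) (b : ZMod n → ZMod 2) :
    cycleSum n b ^ 2 = 0 ∨ cycleSum n b ^ 2 = 2 ^ (n + 1) := by
  obtain ⟨m, rfl⟩ : ∃ m, n = m + 1 := ⟨n - 1, by omega⟩
  haveI : NeZero (m + 1) := ⟨by omega⟩
  set f : (ZMod (m + 1) → ZMod 2) → ℤ :=
    fun x => e2 ((∑ i : ZMod (m + 1), x i * x (i + 1)) + ∑ i : ZMod (m + 1), b i * x i)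
    with hf
  have h1 : cycleSum (m + 1) b = ∑ x : ZMod (m + 1) → ZMod 2, f x := by
    rw [cycleSum]
    refine Finset.sum_congr rfl fun x _ => ?_
    rw [hf]
    rw [pow_add, ← e2_natCast, ← e2_natCast, ← e2_add]
    congr 1
    push_cast [val_cast]
    rfl
  have h2 : cycleSum (m + 1) b ^ 2 =
      ∑ z : ZMod (m + 1) → ZMod 2,
        e2 ((∑ i : ZMod (m + 1), z i * z (i + 1)) + ∑ i : ZMod (m + 1), b i * z i) *
          ∑ x : ZMod (m + 1) → ZMod 2,
            e2 (∑ i : ZMod (m + 1), (z (i + 1) + z (i - 1)) * x i) := by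
    rw [h1, sq, Finset.sum_mul_sum]
    have hinner : ∀ x : ZMod (m + 1) → ZMod 2,
        (∑ y : ZMod (m + 1) → ZMod 2, f x * f y)
          = ∑ z : ZMod (m + 1) → ZMod 2, f x * f (x + z) :=
      fun x => (Fintype.sum_equiv (Equiv.addLeft x)
        (fun z => f x * f (x + z)) (fun y => f x * f y) (fun z => rfl)).symm
    rw [Finset.sum_congr rfl fun x _ => hinner x, Finset.sum_comm]
    refine Finset.sum_congr rfl fun z _ => ?_
    rw [Finset.mul_sum]
    refine Finset.sum_congr rfl fun x _ => ?_
    rw [hf]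
    rw [← e2_add, ← e2_add]
    congr 1
    exact exponent_id (m + 1) b z x
  have h3 : cycleSum (m + 1) b ^ 2 =
      ∑ z : ZMod (m + 1) → ZMod 2,
        e2 ((∑ i : ZMod (m + 1), z i * z (i + 1)) + ∑ i : ZMod (m + 1), b i * z i) *
          (if (fun i => z (i + 1) + z (i - 1)) = (0 : ZMod (m + 1) → ZMod 2)
            then (2 : ℤ) ^ (m + 1) else 0) := by
    rw [h2]
    exact Finset.sum_congr rfl fun z _ => by
      rw [sum_linear (m + 1) (fun i => z (i + 1) + z (i - 1))]
  have hfilter : (Finset.univ.filter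
      (fun z : ZMod (m + 1) → ZMod 2 => (fun i => z (i + 1) + z (i - 1)) = 0))
      = {(fun _ => 0 : ZMod (m + 1) → ZMod 2), (fun _ => 1 : ZMod (m + 1) → ZMod 2)} := by
    ext z
    simp only [Finset.mem_filter, Finset.mem_univ, true_and, Finset.mem_insert,
      Finset.mem_singleton]
    constructor
    · intro hz
      have hz' : ∀ i : ZMod (m + 1), z (i + 1) + z (i - 1) = 0 := fun i => congrFun hz i
      have hconst := const_of (m + 1) hodd z hz'
      rcases zmod2_cases (z 0) with h0 | h0
      · left; funext i; rw [hconst i, h0]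
      · right; funext i; rw [hconst i, h0]
    · rintro (rfl | rfl)
      · funext i; show (0 : ZMod 2) + 0 = 0; decide
      · funext i; show (1 : ZMod 2) + 1 = 0; decide
  have hne : (fun _ => 0 : ZMod (m + 1) → ZMod 2) ≠ (fun _ => 1 : ZMod (m + 1) → ZMod 2) := by
    intro h
    have := congrFun h 0
    exact absurd this (by decide)
  have h4 : cycleSum (m + 1) b ^ 2 =
      (2 : ℤ) ^ (m + 1) * (1 + e2 (1 + ∑ i : ZMod (m + 1), b i)) := by
    rw [h3, ← Finset.sum_filter_add_sum_filter_not Finset.univ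
      (fun z : ZMod (m + 1) → ZMod 2 => (fun i => z (i + 1) + z (i - 1)) = 0)]
    have hval0 : (∑ z ∈ Finset.univ.filter
        (fun z : ZMod (m + 1) → ZMod 2 => ¬(fun i => z (i + 1) + z (i - 1)) = 0),
        e2 ((∑ i : ZMod (m + 1), z i * z (i + 1)) + ∑ i : ZMod (m + 1), b i * z i) *
          (if (fun i => z (i + 1) + z (i - 1)) = (0 : ZMod (m + 1) → ZMod 2)
            then (2 : ℤ) ^ (m + 1) else 0)) = 0 := by
      refine Finset.sum_eq_zero fun z hz => ?_
      rw [Finset.mem_filter] at hz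
      rw [if_neg hz.2, mul_zero]
    rw [hval0, add_zero, hfilter, Finset.sum_pair hne]
    have hsum1 : (∑ _i : ZMod (m + 1), (1 : ZMod 2) * 1) = (1 : ZMod 2) := by
      simp only [mul_one, Finset.sum_const, Finset.card_univ, ZMod.card, nsmul_eq_mul, mul_one]
      rw [show (((m + 1 : ℕ) : ZMod 2)) = (((m + 1) % 2 : ℕ) : ZMod 2) from
        (ZMod.natCast_mod (m + 1) 2).symm, Nat.odd_iff.mp hodd]
      norm_num
    have hif : ∀ a : ZMod 2, (if (fun _ : ZMod (m + 1) => a + a) = (0 : ZMod (m + 1) → ZMod 2)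
        then (2 : ℤ) ^ (m + 1) else 0) = (2 : ℤ) ^ (m + 1) := by
      intro a
      rw [if_pos]
      funext i
      show a + a = (0 : ZMod 2)
      rcases zmod2_cases a with rfl | rfl <;> decide
    have t0 : ((∑ _i : ZMod (m + 1), (0 : ZMod 2) * 0)
        + ∑ i : ZMod (m + 1), b i * 0) = 0 := by simp
    have t1 : ((∑ _i : ZMod (m + 1), (1 : ZMod 2) * 1) + ∑ i : ZMod (m + 1), b i * 1) =
        1 + ∑ i : ZMod (m + 1), b i := by
      rw [hsum1]; simp
    simp only [t0, t1, hif, e2_zero]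
    ring
  rcases zmod2_cases (∑ i : ZMod (m + 1), b i) with hs | hs
  · left
    rw [h4, hs]
    rw [show (1 + 0 : ZMod 2) = 1 from by decide, e2_one]
    ring
  · right
    rw [h4, hs]
    rw [show (1 + 1 : ZMod 2) = 0 from by decide, e2_zero]
    ring
end

section
/- Let n : ℕ be even with n ≥ 4 and let b : ZMod n → ZMod 2. Then the cycle exponential sum satisfies S(b)^2 = 0 or S(b)^2 = 2^(n+2). Equivalently, when the EDU-QGC that applies a CZ(π) gate along each edge of the n-cycle followed by a Hadamard on every node is applied to the state |+⟩^{⊗n}, each measured bitstring b occurs with probability 4^{-n} S(b)^2 ∈ {0, 2^{-(n-2)}}. -/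
open Finset

def chi (a : ZMod 2) : ℤ := (-1) ^ a.val

lemma chi_add : ∀ a b : ZMod 2, chi (a + b) = chi a * chi b := by decide

lemma chi_natCast (k : ℕ) : chi (k : ZMod 2) = (-1 : ℤ) ^ k := by
  unfold chi
  rw [ZMod.val_natCast]
  conv_rhs => rw [← Nat.div_add_mod k 2, pow_add, pow_mul]
  norm_num

lemma chi_sum {ι : Type*} (s : Finset ι) (g : ι → ZMod 2) :
    chi (∑ i ∈ s, g i) = ∏ i ∈ s, chi (g i) := by
  induction s using Finset.cons_induction with
  | empty => simp [chi]
  | cons a s ha ih => simp [Finset.sum_cons, Finset.prod_cons, chi_add, ih]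

lemma chi_inner : ∀ v : ZMod 2, (∑ a : ZMod 2, chi (a * v)) = if v = 0 then 2 else 0 := by
  decide

lemma linSum {ι : Type*} [Fintype ι] [DecidableEq ι] (w : ι → ZMod 2) :
    (∑ x : ι → ZMod 2, chi (∑ i, x i * w i)) = if w = 0 then 2 ^ Fintype.card ι else 0 := by
  have h1 : ∀ x : ι → ZMod 2, chi (∑ i, x i * w i) = ∏ i, chi (x i * w i) :=
    fun x => chi_sum _ _
  simp_rw [h1]
  rw [← Fintype.piFinset_univ,
    ← Finset.prod_univ_sum (fun _ => (univ : Finset (ZMod 2))) (fun i a => chi (a * w i))]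
  by_cases hw : w = 0
  · subst hw
    simp [chi_inner, Finset.prod_const, Finset.card_univ, chi]
  · rw [if_neg hw]
    obtain ⟨i, hi⟩ := Function.ne_iff.mp hw
    exact Finset.prod_eq_zero (Finset.mem_univ i) (by rw [chi_inner]; simpa using hi)

lemma z2_aab : ∀ a b : ZMod 2, a + (a + b) = b := by decide
lemma z2_cancel : ∀ a b : ZMod 2, a + b = 0 → a = b := by decide
lemma z2_key : ∀ a b c : ZMod 2, a + (a + b + c) = b + c := by decide
lemma z2_quad : ∀ a c t : ZMod 2, (a + c * t) * (a + c * (t + 1)) = (a + c * t) * (1 + c) := by decide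
lemma z2_cc : ∀ c s : ZMod 2, c * s * (1 + c) = 0 := by decide
lemma prodSum : ∀ U W : ZMod 2,
    (∑ p : ZMod 2 × ZMod 2, chi (p.1 * U + p.2 * W)) = if U = 0 ∧ W = 0 then 4 else 0 := by
  decide


theorem cycleSum_sq_even (n : ℕ) (hn : 4 ≤ n) (heven : Even n) (b : ZMod n → ZMod 2) :
    cycleSum n b ^ 2 = 0 ∨ cycleSum n b ^ 2 = 2 ^ (n + 2) := by
  obtain ⟨m, rfl⟩ : ∃ m, n = m + 1 := ⟨n - 1, by omega⟩
  have h2 : (2 : ℕ) ∣ m + 1 := heven.two_dvd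
  set Qb : (ZMod (m+1) → ZMod 2) → ZMod 2 :=
    fun x => (∑ i, x i * x (i+1)) + ∑ i, b i * x i with hQb
  -- Step A: rewrite cycleSum via chi
  have stepA : cycleSum (m+1) b = ∑ x : ZMod (m+1) → ZMod 2, chi (Qb x) := by
    simp only [cycleSum]
    refine Finset.sum_congr rfl fun x _ => ?_
    rw [← chi_natCast]
    congr 1
    push_cast [ZMod.natCast_val, ZMod.cast_id]
    rfl
  -- reindex lemma
  have reidx : ∀ (u v : ZMod (m+1) → ZMod 2), (∑ i, u i * v (i+1)) = ∑ i, u (i-1) * v i := by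
    intro u v
    exact Fintype.sum_equiv (Equiv.addRight (1 : ZMod (m+1))) _ _ (fun i => by simp)
  -- key char-2 identity
  have key : ∀ x z : ZMod (m+1) → ZMod 2,
      Qb x + Qb (x + z) = Qb z + ∑ i, x i * (z (i+1) + z (i-1)) := by
    intro x z
    have e1 : Qb (x + z) = Qb x + Qb z + ((∑ i, x i * z (i+1)) + ∑ i, z i * x (i+1)) := by
      simp only [hQb, Pi.add_apply]
      simp only [← Finset.sum_add_distrib]
      exact Finset.sum_congr rfl fun i _ => by ring
    have merge : (∑ i, x i * z (i+1)) + ∑ i, z (i-1) * x i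
        = ∑ i, x i * (z (i+1) + z (i-1)) := by
      rw [← Finset.sum_add_distrib]
      exact Finset.sum_congr rfl fun i _ => by ring
    rw [e1, reidx z x, merge]
    exact z2_key _ _ _
  -- square expansion
  have sq : cycleSum (m+1) b ^ 2
      = ∑ z : ZMod (m+1) → ZMod 2, chi (Qb z) *
          (if (fun i => z (i+1) + z (i-1)) = (0 : ZMod (m+1) → ZMod 2)
            then (2:ℤ)^(m+1) else 0) := by
    rw [stepA, pow_two, Finset.sum_mul_sum]
    have hx : ∀ x : ZMod (m+1) → ZMod 2,
        (∑ y : ZMod (m+1) → ZMod 2, chi (Qb x) * chi (Qb y))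
          = ∑ z : ZMod (m+1) → ZMod 2, chi (Qb x) * chi (Qb (x + z)) :=
      fun x => (Fintype.sum_equiv (Equiv.addLeft x) _ _ (fun z => rfl)).symm
    rw [Finset.sum_congr rfl fun x _ => hx x, Finset.sum_comm]
    refine Finset.sum_congr rfl fun z _ => ?_
    have hterm : ∀ x : ZMod (m+1) → ZMod 2,
        chi (Qb x) * chi (Qb (x + z))
          = chi (Qb z) * chi (∑ i, x i * (z (i+1) + z (i-1))) := by
      intro x
      rw [← chi_add, ← chi_add, key x z]
    rw [Finset.sum_congr rfl fun x _ => hterm x, ← Finset.mul_sum,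
      linSum (fun i => z (i+1) + z (i-1)), ZMod.card]
  rw [sq]
  simp_rw [mul_ite, mul_zero]
  rw [← Finset.sum_filter]
  -- the radical via (a, c)
  set π : ZMod (m+1) →+* ZMod 2 := ZMod.castHom h2 (ZMod 2) with hπ
  set g : ZMod 2 × ZMod 2 → (ZMod (m+1) → ZMod 2) := fun p i => p.1 + p.2 * π i with hg
  have hπadd1 : ∀ i : ZMod (m+1), π (i + 1) = π i + 1 := fun i => by rw [map_add, map_one]
  have hπsub1 : ∀ i : ZMod (m+1), π (i - 1) = π i + 1 := fun i => by
    rw [map_sub, map_one]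
    generalize π i = t; revert t; decide
  have hg_mem : ∀ p : ZMod 2 × ZMod 2,
      (fun i => g p (i+1) + g p (i-1)) = (0 : ZMod (m+1) → ZMod 2) := by
    rintro ⟨a, c⟩
    funext i
    show (a + c * π (i+1)) + (a + c * π (i-1)) = (0 : ZMod 2)
    rw [hπadd1, hπsub1]
    generalize π i = t
    revert a c t
    decide
  have hg_inv : ∀ z : ZMod (m+1) → ZMod 2,
      ((fun i => z (i+1) + z (i-1)) = (0 : ZMod (m+1) → ZMod 2)) →
        g (z 0, z 0 + z 1) = z := by
    intro z hz
    have step2 : ∀ j : ZMod (m+1), z (j + 2) = z j := by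
      intro j
      have h := congrFun hz (j + 1)
      simp only [Pi.zero_apply] at h
      have e : j + 1 - 1 = j := by ring
      rw [e] at h
      have e2 : j + 1 + 1 = j + 2 := by ring
      rw [e2] at h
      exact z2_cancel _ _ h
    have nat_step : ∀ k : ℕ,
        z ((k : ZMod (m+1))) = z 0 + (z 0 + z 1) * ((k : ℕ) : ZMod 2) := by
      intro k
      induction k using Nat.strong_induction_on with
      | _ k ih =>
        rcases k with _ | k
        · simp
        rcases k with _ | k
        · rw [Nat.cast_one, Nat.cast_one, mul_one]
          exact (z2_aab (z 0) (z 1)).symm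
        · have eL : (((k+2 : ℕ)) : ZMod (m+1)) = (k : ZMod (m+1)) + 2 := by push_cast; ring
          have eR : (((k+2 : ℕ)) : ZMod 2) = ((k : ℕ) : ZMod 2) := by
            rw [Nat.cast_add, ZMod.natCast_self, add_zero]
          have hlt : k < k + 1 + 1 := Nat.lt_succ_of_lt (Nat.lt_succ_self k)
          have hk := ih k hlt
          rw [eL, step2, hk, eR]
    funext i
    have hv : ((i.val : ℕ) : ZMod (m+1)) = i := ZMod.natCast_rightInverse i
    show z 0 + (z 0 + z 1) * π i = z i
    have hπi : π i = ((i.val : ℕ) : ZMod 2) := by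
      conv_lhs => rw [← hv]
      exact map_natCast π i.val
    rw [hπi, ← nat_step i.val, hv]
  -- sum over radical = sum over pairs
  have bij : ∑ z ∈ Finset.univ.filter
        (fun z : ZMod (m+1) → ZMod 2 =>
          (fun i => z (i+1) + z (i-1)) = (0 : ZMod (m+1) → ZMod 2)),
        chi (Qb z) * (2:ℤ)^(m+1)
      = ∑ p : ZMod 2 × ZMod 2, chi (Qb (g p)) * (2:ℤ)^(m+1) := by
    refine (Finset.sum_nbij' (i := g)
      (j := fun z => (z 0, z 0 + z 1)) ?_ ?_ ?_ ?_ ?_).symm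
    · intro p _
      exact Finset.mem_filter.mpr ⟨Finset.mem_univ _, hg_mem p⟩
    · intro z _
      exact Finset.mem_univ _
    · rintro ⟨a, c⟩ _
      have h0 : g (a, c) 0 = a := by
        show a + c * π 0 = a
        rw [map_zero, mul_zero, add_zero]
      show (g (a, c) 0, g (a, c) 0 + g (a, c) 1) = (a, c)
      have h1 : g (a, c) 1 = a + c := by
        show a + c * π 1 = a + c
        rw [map_one, mul_one]
      rw [h0, h1, z2_aab]
    · intro z hz
      exact hg_inv z (Finset.mem_filter.mp hz).2
    · intro p _
      rfl
  rw [bij]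
  have hcN : ((m+1 : ℕ) : ZMod 2) = 0 := (ZMod.natCast_eq_zero_iff _ _).mpr h2
  have hQg : ∀ p : ZMod 2 × ZMod 2,
      Qb (g p) = p.1 * (∑ i, b i) + p.2 * (∑ i, b i * π i) := by
    rintro ⟨a, c⟩
    show (∑ i, (a + c * π i) * (a + c * π (i+1))) + (∑ i, b i * (a + c * π i))
        = a * (∑ i, b i) + c * (∑ i, b i * π i)
    have hQ0 : (∑ i, (a + c * π i) * (a + c * π (i+1))) = 0 := by
      have e : ∀ i : ZMod (m+1),
          (a + c * π i) * (a + c * π (i+1)) = (a + c * π i) * (1 + c) := fun i => by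
        rw [hπadd1 i]; exact z2_quad a c (π i)
      rw [Finset.sum_congr rfl fun i _ => e i, ← Finset.sum_mul, Finset.sum_add_distrib,
        ← Finset.mul_sum, Finset.sum_const, Finset.card_univ, ZMod.card, nsmul_eq_mul, hcN,
        zero_mul, zero_add, z2_cc]
    rw [hQ0, zero_add]
    rw [Finset.sum_congr rfl fun i _ =>
        (by ring : b i * (a + c * π i) = a * b i + c * (b i * π i)),
      Finset.sum_add_distrib, ← Finset.mul_sum, ← Finset.mul_sum]
  have final : ∑ p : ZMod 2 × ZMod 2, chi (Qb (g p)) * (2:ℤ)^(m+1)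
      = (if (∑ i, b i) = 0 ∧ (∑ i, b i * π i) = 0 then 4 else 0) * 2^(m+1) := by
    rw [← Finset.sum_mul]
    congr 1
    rw [Finset.sum_congr rfl fun p _ => by rw [hQg p]]
    exact prodSum _ _
  rw [final]
  by_cases h : (∑ i, b i) = 0 ∧ (∑ i, b i * π i) = 0
  · right
    rw [if_pos h, pow_add]
    ring
  · left
    rw [if_neg h, zero_mul]
end

section
/- Let n : ℕ with n ≥ 3 and let b : ZMod n → ZMod 2. If the cycle exponential sum S(b) is nonzero, then the number of ones in b has the same parity as n: (∑_{i : ZMod n} (b i).val) ≡ n (mod 2). That is, every bitstring observed with positive probability when measuring the CZ(π) cycle circuit on |+⟩^{⊗n} contains a number of ones with the same parity as the cycle length n. -/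
lemma neg_one_pow_eq_of_cast_eq {a c : ℕ} (h : (a : ZMod 2) = (c : ZMod 2)) :
    (-1 : ℤ)^a = (-1)^c := by
  rw [ZMod.natCast_eq_natCast_iff] at h
  rw [neg_one_pow_eq_pow_mod_two, h, ← neg_one_pow_eq_pow_mod_two]

theorem cycleSum_ne_zero_parity (n : ℕ) [NeZero n] (hn : 3 ≤ n)
    (b : ZMod n → ZMod 2) (hS : cycleSum n b ≠ 0) :
    (∑ i : ZMod n, (b i).val) ≡ n [MOD 2] := by
  obtain ⟨m, rfl⟩ : ∃ m, n = m + 1 := ⟨n - 1, by omega⟩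
  by_contra hpar
  apply hS
  have hodd : Odd ((m + 1) + ∑ i : ZMod (m + 1), (b i).val) := by
    unfold Nat.ModEq at hpar
    rw [Nat.odd_iff]
    omega
  have h11 : ∀ y : ZMod 2, y + 1 + 1 = y := by decide
  have inv : Function.Involutive
      (fun x : ZMod (m + 1) → ZMod 2 => fun i => x i + 1) :=
    fun x => funext fun i => h11 (x i)
  set f : (ZMod (m + 1) → ZMod 2) → ℤ := fun x =>
      (-1 : ℤ) ^ ((∑ i : ZMod (m + 1), (x i).val * (x (i + 1)).val) +
        ∑ i : ZMod (m + 1), (b i).val * (x i).val) with hf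
  have hterm : ∀ x : ZMod (m + 1) → ZMod 2,
      f ((Function.Involutive.toPerm _ inv) x) = -(f x) := by
    intro x
    have hcast :
        ((((∑ i : ZMod (m + 1), ((x i + 1)).val * ((x (i + 1) + 1)).val) +
          ∑ i : ZMod (m + 1), (b i).val * ((x i + 1)).val) : ℕ) : ZMod 2) =
        (((((∑ i : ZMod (m + 1), (x i).val * (x (i + 1)).val) +
          ∑ i : ZMod (m + 1), (b i).val * (x i).val) +
          ((m + 1) + ∑ i : ZMod (m + 1), (b i).val)) : ℕ) : ZMod 2) := by
      push_cast
      simp only [ZMod.natCast_val, ZMod.cast_id]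
      have hx : ∀ i : ZMod (m + 1),
          (x i + 1) * (x (i + 1) + 1) = x i * x (i + 1) + (x i + x (i + 1)) + 1 :=
        fun i => by ring
      have hb : ∀ i : ZMod (m + 1), b i * (x i + 1) = b i * x i + b i := fun i => by ring
      simp only [hx, hb, Finset.sum_add_distrib]
      have hshift : ∑ i : ZMod (m + 1), x (i + 1) = ∑ i : ZMod (m + 1), x i :=
        Fintype.sum_equiv (Equiv.addRight 1) _ _ (fun i => rfl)
      rw [hshift]
      have h2 : (∑ i : ZMod (m + 1), x i) + ∑ i : ZMod (m + 1), x i = 0 :=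
        CharTwo.add_self_eq_zero _
      have hone : (∑ _i : ZMod (m + 1), (1 : ZMod 2)) = ((m + 1 : ℕ) : ZMod 2) := by
        simp [Finset.sum_const, Finset.card_univ, ZMod.card]
      rw [hone]
      push_cast
      linear_combination h2
    show f (fun i => x i + 1) = -(f x)
    rw [hf]
    simp only
    rw [neg_one_pow_eq_of_cast_eq hcast, pow_add, hodd.neg_one_pow]
    ring
  have key : cycleSum (m + 1) b = - cycleSum (m + 1) b := by
    have h1 : cycleSum (m + 1) b = ∑ x : ZMod (m + 1) → ZMod 2, f x := rfl
    rw [h1]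
    conv_lhs => rw [← Equiv.sum_comp (Function.Involutive.toPerm _ inv) f]
    rw [Finset.sum_congr rfl (fun x _ => hterm x), Finset.sum_neg_distrib]
  omega
end

section
/- Let n : ℕ with n ≥ 3. The number of bitstrings b : ZMod n → ZMod 2 with nonzero cycle exponential sum is: card {b | S(b) ≠ 0} = 2^(n−1) if n is odd, and card {b | S(b) ≠ 0} = 2^(n−2) if n is even. That is, exactly half of all bitstrings are observed with positive probability in the CZ(π) cycle circuit when n is odd, and exactly a quarter when n is even. -/
open Finset

namespace CycleAux

/-- sign character on ZMod 2 -/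
def χ (a : ZMod 2) : ℤ := (-1) ^ a.val

lemma χ_add : ∀ a b : ZMod 2, χ (a + b) = χ a * χ b := by decide

lemma χ_zero : χ 0 = 1 := rfl
lemma χ_one : χ 1 = -1 := rfl

lemma pow_sum_val {ι : Type*} (s : Finset ι) (f : ι → ZMod 2) :
    (-1:ℤ) ^ (∑ i ∈ s, (f i).val) = χ (∑ i ∈ s, f i) := by
  classical
  induction s using Finset.cons_induction with
  | empty => simp [χ]
  | cons a s ha ih => rw [Finset.sum_cons, Finset.sum_cons, pow_add, χ_add, ih]; rfl

variable {n : ℕ} [NeZero n]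

def q (x : ZMod n → ZMod 2) : ZMod 2 := ∑ i, x i * x (i+1)

def dot (b x : ZMod n → ZMod 2) : ZMod 2 := ∑ i, b i * x i

lemma dot_add_right (b x y : ZMod n → ZMod 2) : dot b (x + y) = dot b x + dot b y := by
  simp [dot, mul_add, Finset.sum_add_distrib]

lemma dot_add_left (b c x : ZMod n → ZMod 2) : dot (b + c) x = dot b x + dot c x := by
  simp [dot, add_mul, Finset.sum_add_distrib]

lemma cycleSum_eq [NeZero n] (b : ZMod n → ZMod 2) :
    cycleSum n b = ∑ x : ZMod n → ZMod 2, χ (q x + dot b x) := by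
  cases n with
  | zero => exact absurd rfl (NeZero.ne 0)
  | succ m =>
    show (∑ x : ZMod (m+1) → ZMod 2, _) = _
    refine Finset.sum_congr rfl fun x _ => ?_
    rw [pow_add, χ_add, q, dot]
    have h1 : ∀ i : ZMod (m+1), (x i).val * (x (i+1)).val = ((x i * x (i+1)).val) := by
      intro i; have : ∀ a b : ZMod 2, a.val * b.val = (a*b).val := by decide
      exact this _ _
    have h2 : ∀ i : ZMod (m+1), (b i).val * (x i).val = ((b i * x i).val) := by
      intro i; have : ∀ a b : ZMod 2, a.val * b.val = (a*b).val := by decide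
      exact this _ _
    rw [Finset.sum_congr rfl (fun i _ => h1 i), Finset.sum_congr rfl (fun i _ => h2 i),
      pow_sum_val, pow_sum_val]

lemma dot_delta (c : ZMod n → ZMod 2) (i₀ : ZMod n) :
    dot c (fun i => if i = i₀ then 1 else 0) = c i₀ := by
  simp [dot, mul_ite, mul_one, mul_zero]

lemma sum_χ_dot (c : ZMod n → ZMod 2) :
    ∑ x : ZMod n → ZMod 2, χ (dot c x) = if c = 0 then (2:ℤ)^n else 0 := by
  by_cases hc : c = 0
  · subst hc
    simp only [if_pos rfl]
    have : ∀ x : ZMod n → ZMod 2, dot (0 : ZMod n → ZMod 2) x = 0 := by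
      intro x; simp [dot]
    simp only [this, χ_zero, Finset.sum_const, Finset.card_univ, Fintype.card_fun,
      ZMod.card, Fintype.card_fin, smul_eq_mul, mul_one]
    norm_num
  · rw [if_neg hc]
    obtain ⟨i₀, hi₀⟩ : ∃ i, c i ≠ 0 := by
      by_contra h; push_neg at h; exact hc (funext h)
    have hci : c i₀ = 1 := by
      have : ∀ a : ZMod 2, a ≠ 0 → a = 1 := by decide
      exact this _ hi₀
    set δ : ZMod n → ZMod 2 := fun i => if i = i₀ then 1 else 0 with hδ
    have key : ∑ x : ZMod n → ZMod 2, χ (dot c x)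
        = ∑ x : ZMod n → ZMod 2, χ (dot c (x + δ)) :=
      (Fintype.sum_equiv (Equiv.addRight δ).symm _ _ (fun x => by simp))
    have : ∀ x : ZMod n → ZMod 2, χ (dot c (x + δ)) = - χ (dot c x) := by
      intro x
      rw [dot_add_right, χ_add, dot_delta, hci, χ_one]
      ring
    rw [Finset.sum_congr rfl (fun x _ => this x), Finset.sum_neg_distrib] at key
    linarith

lemma q_add (x z : ZMod n → ZMod 2) :
    q (x + z) = q x + q z + dot (fun i => z (i+1) + z (i-1)) x := by
  have h2 : (2 : ZMod 2) = 0 := by decide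
  have e1 : q (x + z) = q x + q z + ((∑ i, x i * z (i+1)) + ∑ i, z i * x (i+1)) := by
    simp only [q, Pi.add_apply]
    rw [← Finset.sum_add_distrib, ← Finset.sum_add_distrib, ← Finset.sum_add_distrib]
    exact Finset.sum_congr rfl fun i _ => by ring
  have e2 : (∑ i, z i * x (i+1)) = ∑ i, z (i - 1) * x i := by
    refine Fintype.sum_equiv (Equiv.addRight (1 : ZMod n)) _ _ fun i => ?_
    simp
  rw [e1, e2, dot]
  rw [← Finset.sum_add_distrib]
  congr 1
  exact Finset.sum_congr rfl fun i _ => by ring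

lemma sq_cycleSum (b : ZMod n → ZMod 2) :
    (cycleSum n b)^2 = ∑ z : ZMod n → ZMod 2,
      χ (q z + dot b z) * (if (fun i => z (i+1) + z (i-1)) = 0 then (2:ℤ)^n else 0) := by
  have h2 : (2 : ZMod 2) = 0 := by decide
  rw [cycleSum_eq, sq, Finset.sum_mul_sum]
  have step1 : ∀ x : ZMod n → ZMod 2,
      ∑ y : ZMod n → ZMod 2, χ (q x + dot b x) * χ (q y + dot b y)
      = ∑ z : ZMod n → ZMod 2, χ (q z + dot b z) * χ (dot (fun i => z (i+1) + z (i-1)) x) := by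
    intro x
    refine (Fintype.sum_equiv (Equiv.addLeft x)
      (fun z => χ (q z + dot b z) * χ (dot (fun i => z (i+1) + z (i-1)) x)) _ fun z => ?_).symm
    show χ (q z + dot b z) * χ (dot (fun i => z (i+1) + z (i-1)) x)
        = χ (q x + dot b x) * χ (q (x + z) + dot b (x + z))
    rw [← χ_add, ← χ_add, q_add, dot_add_right]
    congr 1
    linear_combination (-(q x + dot b x)) * h2
  rw [Finset.sum_congr rfl (fun x _ => step1 x), Finset.sum_comm]
  refine Finset.sum_congr rfl fun z _ => ?_
  rw [← Finset.mul_sum, sum_χ_dot]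
lemma step2_of_ker (z : ZMod n → ZMod 2)
    (hz : (fun i => z (i+1) + z (i-1)) = 0) : ∀ j : ZMod n, z (j + 2) = z j := by
  intro j
  have h := congrFun hz (j + 1)
  simp only [Pi.zero_apply] at h
  have e1 : (j + 1) + 1 = j + 2 := by ring
  have e2 : (j + 1) - 1 = j := by ring
  rw [e1, e2] at h
  have hab : ∀ a b : ZMod 2, a + b = 0 → a = b := by decide
  exact hab _ _ h

lemma ker_odd (hodd : Odd n) (z : ZMod n → ZMod 2)
    (hz : (fun i => z (i+1) + z (i-1)) = 0) : z = 0 ∨ z = fun _ => 1 := by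
  have hstep := step2_of_ker z hz
  have hk : ∀ k : ℕ, ∀ j : ZMod n, z (j + 2 * (k : ZMod n)) = z j := by
    intro k
    induction k with
    | zero => simp
    | succ k ih =>
      intro j
      have e : j + 2 * ((k+1 : ℕ) : ZMod n) = (j + 2 * (k : ZMod n)) + 2 := by
        push_cast; ring
      rw [e, hstep, ih]
  have hconst : ∀ j : ZMod n, z j = z 0 := by
    intro j
    obtain ⟨m, hm⟩ := hodd
    have e0 : 2 * ((n+1)/2) = n + 1 := by omega
    have e1 : 2 * ((n+1)/2 * j.val) = (n+1) * j.val := by rw [← mul_assoc, e0]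
    have e : (2 : ZMod n) * (((n+1)/2 * j.val : ℕ) : ZMod n) = j := by
      have : (2 : ZMod n) * (((n+1)/2 * j.val : ℕ) : ZMod n)
          = ((2 * ((n+1)/2 * j.val) : ℕ) : ZMod n) := by push_cast; ring
      rw [this, e1]
      push_cast
      simp [ZMod.natCast_self, ZMod.natCast_rightInverse j]
    have := hk ((n+1)/2 * j.val) 0
    rw [zero_add, e] at this
    exact this
  have hz0 := (by decide : ∀ a : ZMod 2, a = 0 ∨ a = 1) (z 0)
  rcases hz0 with h | h
  · left; funext j; rw [hconst j, h]; rfl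
  · right; funext j; rw [hconst j, h]

lemma L_zero : (fun i : ZMod n => (0 : ZMod n → ZMod 2) (i+1) + (0 : ZMod n → ZMod 2) (i-1)) = 0 := by
  funext i; simp

lemma L_one : (fun i : ZMod n => (fun _ : ZMod n => (1:ZMod 2)) (i+1) + (fun _ : ZMod n => (1:ZMod 2)) (i-1)) = 0 := by
  funext i; simp only [Pi.zero_apply]; decide

lemma q_zero : q (0 : ZMod n → ZMod 2) = 0 := by simp [q]

lemma dot_zero (b : ZMod n → ZMod 2) : dot b 0 = 0 := by simp [dot]

lemma q_one : q (fun _ : ZMod n => (1:ZMod 2)) = (n : ZMod 2) := by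
  simp [q, Finset.sum_const, Finset.card_univ, ZMod.card]

lemma dot_one (b : ZMod n → ZMod 2) : dot b (fun _ => 1) = ∑ i, b i := by
  simp [dot]

lemma cycleSum_sq_odd (hodd : Odd n) (b : ZMod n → ZMod 2) :
    (cycleSum n b)^2 = 2^n + χ (1 + ∑ i, b i) * 2^n := by
  classical
  rw [sq_cycleSum]
  set f : (ZMod n → ZMod 2) → ℤ := fun z =>
    χ (q z + dot b z) * (if (fun i => z (i+1) + z (i-1)) = 0 then (2:ℤ)^n else 0) with hf
  have hne : (0 : ZMod n → ZMod 2) ≠ fun _ => 1 := by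
    intro h
    have := congrFun h 0
    simp at this
  have hsub : ∑ z : ZMod n → ZMod 2, f z
      = ∑ z ∈ ({0, fun _ => 1} : Finset (ZMod n → ZMod 2)), f z := by
    refine (Finset.sum_subset (Finset.subset_univ _) fun z _ hz => ?_).symm
    have : ¬ ((fun i => z (i+1) + z (i-1)) = 0) := by
      intro hL
      rcases ker_odd hodd z hL with h | h <;>
        simp [h, Finset.mem_insert, Finset.mem_singleton] at hz
    rw [hf]
    simp only [this, if_false, mul_zero]
  rw [hsub, Finset.sum_pair hne, hf]
  simp only [L_zero, L_one, if_pos rfl, q_zero, dot_zero, q_one, dot_one, add_zero, χ_zero,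
    one_mul]
  have hn2 : (n : ZMod 2) = 1 := by
    obtain ⟨m, hm⟩ := hodd
    subst hm
    push_cast
    have h2 : (2 : ZMod 2) = 0 := by decide
    linear_combination (m : ZMod 2) * h2
  rw [hn2]
  simp
def Epar (h2n : (2:ℕ) ∣ n) : ZMod n → ZMod 2 := fun i => ZMod.castHom h2n (ZMod 2) i

variable (h2n : (2:ℕ) ∣ n)

lemma Epar_add_one (i : ZMod n) : Epar h2n (i+1) = Epar h2n i + 1 := by
  simp [Epar, map_add, map_one]

lemma Epar_sub_one (i : ZMod n) : Epar h2n (i-1) = Epar h2n i - 1 := by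
  simp [Epar, map_sub, map_one]

lemma Epar_zero : Epar h2n 0 = 0 := map_zero (ZMod.castHom h2n (ZMod 2))

lemma Epar_one : Epar h2n 1 = 1 := map_one (ZMod.castHom h2n (ZMod 2))

lemma L_E : (fun i : ZMod n => Epar h2n (i+1) + Epar h2n (i-1)) = 0 := by
  funext i
  rw [Epar_add_one, Epar_sub_one]
  exact (by decide : ∀ a : ZMod 2, (a+1) + (a-1) = 0) _

lemma L_O : (fun i : ZMod n => (fun j => 1 + Epar h2n j) (i+1) + (fun j => 1 + Epar h2n j) (i-1)) = 0 := by
  funext i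
  show (1 + Epar h2n (i+1)) + (1 + Epar h2n (i-1)) = 0
  rw [Epar_add_one, Epar_sub_one]
  exact (by decide : ∀ a : ZMod 2, (1+(a+1)) + (1+(a-1)) = 0) _

lemma ker_even (z : ZMod n → ZMod 2)
    (hz : (fun i => z (i+1) + z (i-1)) = 0) :
    z = 0 ∨ z = Epar h2n ∨ z = (fun i => 1 + Epar h2n i) ∨ z = fun _ => 1 := by
  have hstep := step2_of_ker z hz
  have H : ∀ k : ℕ, z ((k:ℕ) : ZMod n) = z 0 + (z 0 + z 1) * Epar h2n ((k:ℕ) : ZMod n) := by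
    intro k
    induction k using Nat.strong_induction_on with
    | _ k ih =>
      match k with
      | 0 => simp [Epar]
      | 1 =>
        have hh : ∀ a b : ZMod 2, b = a + (a + b) * 1 := by decide
        simpa [Epar, map_one] using hh (z 0) (z 1)
      | (k+2) =>
        have e : ((k + 2 : ℕ) : ZMod n) = ((k:ℕ) : ZMod n) + 2 := by push_cast; ring
        have h20 : (ZMod.castHom h2n (ZMod 2)) (2 : ZMod n) = 0 := by
          have : (2 : ZMod n) = (1 : ZMod n) + 1 := by ring
          rw [this, map_add, map_one]
          decide
        have eE : Epar h2n (((k:ℕ) : ZMod n) + 2) = Epar h2n ((k:ℕ) : ZMod n) := by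
          simp [Epar, map_add, h20]
        rw [e, hstep, eE]
        exact ih k (by omega)
  have hform : z = fun j => z 0 + (z 0 + z 1) * Epar h2n j := by
    funext j
    have h := H j.val
    rwa [show ((j.val : ℕ) : ZMod n) = j from ZMod.natCast_rightInverse j] at h
  rcases (by decide : ∀ a : ZMod 2, a = 0 ∨ a = 1) (z 0) with h0 | h0 <;>
    rcases (by decide : ∀ a : ZMod 2, a = 0 ∨ a = 1) (z 1) with h1 | h1
  · left; rw [hform, h0, h1]; funext j; simp
  · right; left; rw [hform, h0, h1]; funext j; simp
  · right; right; left; rw [hform, h0, h1]; funext j; simp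
  · right; right; right; rw [hform, h0, h1]; funext j
    rw [(by decide : (1:ZMod 2)+1 = 0)]; simp

lemma q_E : q (Epar h2n) = 0 := by
  refine Finset.sum_eq_zero fun i _ => ?_
  rw [Epar_add_one]
  exact (by decide : ∀ a : ZMod 2, a * (a+1) = 0) _

lemma q_O : q (fun i => 1 + Epar h2n i) = 0 := by
  refine Finset.sum_eq_zero fun i _ => ?_
  show (1 + Epar h2n i) * (1 + Epar h2n (i+1)) = 0
  rw [Epar_add_one]
  exact (by decide : ∀ a : ZMod 2, (1+a) * (1+(a+1)) = 0) _

lemma dot_one_split (b : ZMod n → ZMod 2) :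
    (∑ i, b i) = dot b (Epar h2n) + dot b (fun i => 1 + Epar h2n i) := by
  have h2 : (2 : ZMod 2) = 0 := by decide
  rw [dot, dot, ← Finset.sum_add_distrib]
  refine Finset.sum_congr rfl fun i _ => ?_
  linear_combination (-(b i * Epar h2n i)) * h2

lemma cycleSum_sq_even (hn2 : (n : ZMod 2) = 0) (b : ZMod n → ZMod 2) :
    (cycleSum n b)^2 = 2^n + χ (dot b (Epar h2n)) * 2^n
      + χ (dot b (fun i => 1 + Epar h2n i)) * 2^n
      + χ (dot b (Epar h2n) + dot b (fun i => 1 + Epar h2n i)) * 2^n := by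
  classical
  rw [sq_cycleSum]
  set E : ZMod n → ZMod 2 := Epar h2n with hE
  set O : ZMod n → ZMod 2 := fun i => 1 + Epar h2n i with hO
  set one : ZMod n → ZMod 2 := fun _ => 1 with hone
  set f : (ZMod n → ZMod 2) → ℤ := fun z =>
    χ (q z + dot b z) * (if (fun i => z (i+1) + z (i-1)) = 0 then (2:ℤ)^n else 0) with hf
  have hE0 : E 0 = 0 := Epar_zero h2n
  have hE1 : E 1 = 1 := Epar_one h2n
  have hno : ¬ ((0 : ZMod 2) = 1) := by decide
  have d1 : (0 : ZMod n → ZMod 2) ≠ E := by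
    intro h
    have := congrFun h 1
    rw [Pi.zero_apply, hE1] at this
    exact hno this
  have d2 : (0 : ZMod n → ZMod 2) ≠ O := by
    intro h
    have := congrFun h 0
    simp only [Pi.zero_apply, hO, Epar_zero h2n, add_zero] at this
    exact hno this
  have d3 : (0 : ZMod n → ZMod 2) ≠ one := by
    intro h
    have := congrFun h 0
    simp only [Pi.zero_apply, hone] at this
    exact hno this
  have d4 : E ≠ O := by
    intro h
    have := congrFun h 0
    simp only [hE, hO, Epar_zero h2n, add_zero] at this
    exact hno this
  have d5 : E ≠ one := by
    intro h
    have := congrFun h 0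
    simp only [hE, hone, Epar_zero h2n] at this
    exact hno this
  have d6 : O ≠ one := by
    intro h
    have := congrFun h 1
    simp only [hO, hone, Epar_one h2n] at this
    exact hno (by
      have : (1:ZMod 2) + 1 = 1 := this
      revert this
      decide)
  have hsub : ∑ z : ZMod n → ZMod 2, f z
      = ∑ z ∈ ({0, E, O, one} : Finset (ZMod n → ZMod 2)), f z := by
    refine (Finset.sum_subset (Finset.subset_univ _) fun z _ hz => ?_).symm
    have hL : ¬ ((fun i => z (i+1) + z (i-1)) = 0) := by
      intro hL
      rcases ker_even h2n z hL with h | h | h | h <;>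
        simp [h, hE, hO, hone, Finset.mem_insert, Finset.mem_singleton] at hz
    rw [hf]
    simp only [hL, if_false, mul_zero]
  have m1 : (0 : ZMod n → ZMod 2) ∉ ({E, O, one} : Finset (ZMod n → ZMod 2)) := by
    simp [Finset.mem_insert, Finset.mem_singleton, d1, d2, d3]
  have m2 : E ∉ ({O, one} : Finset (ZMod n → ZMod 2)) := by
    simp [Finset.mem_insert, Finset.mem_singleton, d4, d5]
  have m3 : O ∉ ({one} : Finset (ZMod n → ZMod 2)) := by
    simp [Finset.mem_singleton, d6]
  rw [hsub, Finset.sum_insert m1, Finset.sum_insert m2, Finset.sum_insert m3,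
    Finset.sum_singleton, hf]
  simp only [L_zero, L_E, L_O, L_one, if_pos rfl, q_zero, dot_zero, q_one, dot_one,
    q_E, q_O, add_zero, zero_add, χ_zero, one_mul, hE, hO, hone]
  rw [hn2]
  simp only [if_true, zero_add, dot_one_split h2n b]
  ring
lemma cycleSum_ne_zero_iff_odd (hodd : Odd n) (b : ZMod n → ZMod 2) :
    cycleSum n b ≠ 0 ↔ (∑ i, b i) = 1 := by
  have hS := cycleSum_sq_odd hodd b
  rcases (by decide : ∀ a : ZMod 2, a = 0 ∨ a = 1) (∑ i, b i) with h | h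
  · rw [h, add_zero, χ_one] at hS
    have h0 : cycleSum n b = 0 := by
      have : (cycleSum n b)^2 = 0 := by rw [hS]; ring
      exact sq_eq_zero_iff.mp this
    refine iff_of_false (not_not_intro h0) ?_
    rw [h]
    decide
  · rw [h, (by decide : (1:ZMod 2) + 1 = 0), χ_zero, one_mul] at hS
    refine iff_of_true (fun hc => ?_) h
    rw [hc, zero_pow (by norm_num : (2:ℕ) ≠ 0)] at hS
    have : (0:ℤ) < 2^n + 2^n := by positivity
    linarith

lemma cycleSum_ne_zero_iff_even (h2n : (2:ℕ) ∣ n) (hn2 : (n : ZMod 2) = 0)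
    (b : ZMod n → ZMod 2) :
    cycleSum n b ≠ 0 ↔
      (dot b (Epar h2n) = 0 ∧ dot b (fun i => 1 + Epar h2n i) = 0) := by
  have hS := cycleSum_sq_even h2n hn2 b
  set u := dot b (Epar h2n) with hu
  set v := dot b (fun i => 1 + Epar h2n i) with hv
  have key : ∀ u v : ZMod 2,
      (1:ℤ) + χ u + χ v + χ (u+v) = if u = 0 ∧ v = 0 then 4 else 0 := by decide
  have hS2 : (cycleSum n b)^2 = (if u = 0 ∧ v = 0 then (4:ℤ) else 0) * 2^n := by
    rw [hS, ← key u v]; ring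
  by_cases hc : u = 0 ∧ v = 0
  · rw [if_pos hc] at hS2
    refine iff_of_true (fun hzero => ?_) hc
    rw [hzero, zero_pow (by norm_num : (2:ℕ) ≠ 0)] at hS2
    have : (0:ℤ) < 4 * 2^n := by positivity
    linarith
  · rw [if_neg hc, zero_mul] at hS2
    exact iff_of_false (not_not_intro (sq_eq_zero_iff.mp hS2)) hc

lemma card_sum_eq_one :
    Fintype.card {b : ZMod n → ZMod 2 // (∑ i, b i) = 1} = 2^(n-1) := by
  classical
  set f : (ZMod n → ZMod 2) → ZMod 2 := fun b => ∑ i, b i with hf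
  set δ : ZMod n → ZMod 2 := fun i => if i = 0 then 1 else 0 with hδ
  have hfδ : f δ = 1 := by simp [hf, hδ]
  have hadd : ∀ b, f (b + δ) = f b + 1 := by
    intro b
    simp only [hf]
    rw [show (∑ i, (b + δ) i) = (∑ i, b i) + ∑ i, δ i by
      rw [← Finset.sum_add_distrib]; rfl]
    rw [show (∑ i, δ i) = 1 from hfδ]
  have hδδ : δ + δ = 0 := by
    funext i
    by_cases h : i = 0 <;> simp [hδ, h] <;> decide
  have e : {b : ZMod n → ZMod 2 // f b = 0} ≃ {b : ZMod n → ZMod 2 // f b = 1} :=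
    { toFun := fun b => ⟨b.1 + δ, by rw [hadd, b.2, zero_add]⟩
      invFun := fun b => ⟨b.1 + δ, by rw [hadd, b.2]; decide⟩
      left_inv := fun b => Subtype.ext (by
        show b.1 + δ + δ = b.1
        rw [add_assoc, hδδ, add_zero])
      right_inv := fun b => Subtype.ext (by
        show b.1 + δ + δ = b.1
        rw [add_assoc, hδδ, add_zero]) }
  have hcards : Fintype.card (ZMod n → ZMod 2)
      = ∑ v : ZMod 2, Fintype.card {b : ZMod n → ZMod 2 // f b = v} := by
    rw [Fintype.card_congr (Equiv.sigmaFiberEquiv f).symm, Fintype.card_sigma]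
  have huniv : (Finset.univ : Finset (ZMod 2)) = {0, 1} := by decide
  rw [huniv, Finset.sum_insert (by decide), Finset.sum_singleton,
    Fintype.card_fun, ZMod.card, ZMod.card, Fintype.card_congr e] at hcards
  have hpow : 2^n = 2 * 2^(n-1) := by
    rw [← pow_succ']
    congr 1
    have := NeZero.pos n
    omega
  have goal' : Fintype.card {b : ZMod n → ZMod 2 // (∑ i, b i) = 1}
      = Fintype.card {b : ZMod n → ZMod 2 // f b = 1} := rfl
  rw [goal']
  clear goal' hf hδ hfδ hadd hδδ e huniv
  omega

lemma card_even_cond (h2n : (2:ℕ) ∣ n) (hn : 3 ≤ n) :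
    Fintype.card {b : ZMod n → ZMod 2 //
      dot b (Epar h2n) = 0 ∧ dot b (fun i => 1 + Epar h2n i) = 0} = 2^(n-2) := by
  classical
  let f : (ZMod n → ZMod 2) → ZMod 2 × ZMod 2 :=
    fun b => (dot b (Epar h2n), dot b (fun i => 1 + Epar h2n i))
  have hf : f = fun b => (dot b (Epar h2n), dot b (fun i => 1 + Epar h2n i)) := rfl
  have e0 : {b : ZMod n → ZMod 2 //
      dot b (Epar h2n) = 0 ∧ dot b (fun i => 1 + Epar h2n i) = 0}
      ≃ {b : ZMod n → ZMod 2 // f b = 0} :=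
    Equiv.subtypeEquivRight (fun b => by simp [hf, Prod.ext_iff])
  have hadd : ∀ b c, f (b + c) = f b + f c := by
    intro b c
    simp [hf, dot_add_left, Prod.ext_iff]
  let p : ZMod 2 × ZMod 2 → (ZMod n → ZMod 2) :=
    fun w i => (if i = 1 then w.1 else 0) + (if i = 0 then w.2 else 0)
  have hp : p = fun w i => (if i = 1 then w.1 else 0) + (if i = 0 then w.2 else 0) := rfl
  have hfp : ∀ w, f (p w) = w := by
    intro w
    have h11 : (1:ZMod 2) + 1 = 0 := by decide
    simp [hf, hp, dot, add_mul, Finset.sum_add_distrib, ite_mul, zero_mul,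
      Finset.sum_ite_eq', Epar_zero h2n, Epar_one h2n, Prod.ext_iff, h11]
  have hpp : ∀ w, p w + p w = 0 := by
    intro w
    funext i
    exact (by decide : ∀ a : ZMod 2, a + a = 0) _
  have hww : ∀ w : ZMod 2 × ZMod 2, w + w = 0 := by decide
  have efib : ∀ w : ZMod 2 × ZMod 2,
      {b : ZMod n → ZMod 2 // f b = w} ≃ {b : ZMod n → ZMod 2 // f b = 0} := by
    intro w
    exact
    { toFun := fun b => ⟨b.1 + p w, by rw [hadd, b.2, hfp, hww]⟩
      invFun := fun b => ⟨b.1 + p w, by rw [hadd, b.2, hfp, zero_add]⟩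
      left_inv := fun b => Subtype.ext (by
        show b.1 + p w + p w = b.1
        rw [add_assoc, hpp, add_zero])
      right_inv := fun b => Subtype.ext (by
        show b.1 + p w + p w = b.1
        rw [add_assoc, hpp, add_zero]) }
  have hcards : Fintype.card (ZMod n → ZMod 2)
      = ∑ w : ZMod 2 × ZMod 2, Fintype.card {b : ZMod n → ZMod 2 // f b = w} := by
    rw [Fintype.card_congr (Equiv.sigmaFiberEquiv f).symm, Fintype.card_sigma]
  have hconst : ∀ w : ZMod 2 × ZMod 2,
      Fintype.card {b : ZMod n → ZMod 2 // f b = w}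
      = Fintype.card {b : ZMod n → ZMod 2 // f b = 0} :=
    fun w => Fintype.card_congr (efib w)
  rw [Finset.sum_congr rfl (fun w _ => hconst w), Finset.sum_const,
    Finset.card_univ, Fintype.card_fun, ZMod.card, ZMod.card, smul_eq_mul] at hcards
  have hc4 : Fintype.card (ZMod 2 × ZMod 2) = 4 := by
    simp [Fintype.card_prod]
  rw [hc4] at hcards
  have hpow : 2^n = 2^2 * 2^(n-2) := by
    rw [← pow_add]
    congr 1
    omega
  rw [Fintype.card_congr e0]
  omega
end CycleAux

theorem card_cycleSum_ne_zero (n : ℕ) [NeZero n] (hn : 3 ≤ n) :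
    (Odd n →
      Fintype.card {b : ZMod n → ZMod 2 // cycleSum n b ≠ 0} = 2 ^ (n - 1)) ∧
    (Even n →
      Fintype.card {b : ZMod n → ZMod 2 // cycleSum n b ≠ 0} = 2 ^ (n - 2)) := by
  constructor
  · intro hodd
    exact (Fintype.card_congr (Equiv.subtypeEquivRight
      (fun b => CycleAux.cycleSum_ne_zero_iff_odd hodd b))).trans
      CycleAux.card_sum_eq_one
  · intro heven
    have h2n : (2:ℕ) ∣ n := heven.two_dvd
    have hn2 : (n : ZMod 2) = 0 := by
      obtain ⟨m, hm⟩ := h2n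
      subst hm
      push_cast
      have h2 : (2 : ZMod 2) = 0 := by decide
      linear_combination (m : ZMod 2) * h2
    exact (Fintype.card_congr (Equiv.subtypeEquivRight
      (fun b => CycleAux.cycleSum_ne_zero_iff_even h2n hn2 b))).trans
      (CycleAux.card_even_cond h2n hn)
end
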